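/- arXiv:2405.04628 — 10 statements merged into one kernel-verified Lean document; each statement's English description precedes it below -/
import Mathlib

section
/- Let L be the smallest constant such that for all j, ‖∇_j V(x_j, x_{-j}) - ∇_j V(x_j, x'_{-j})‖ ≤ L‖x_{-j} - x'_{-j}‖, and let L_c be the smallest constant such that ‖∇_j V(y_j, x_{-j}) - ∇_j V(z_j, x_{-j})‖ ≤ L_c‖y_j - z_j‖ for all j. Then for a twice continuously differentiable convex function V: ℝ^m → ℝ (with m blocks each of dimension 1), we have L ≤ √(m-1) · L_c. -/
/-- The `j`-th partial derivative (partial gradient for 1-dimensional blocks) of `V`. -/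
noncomputable def pgrad {m : ℕ} (V : EuclideanSpace ℝ (Fin m) → ℝ)
    (j : Fin m) (x : EuclideanSpace ℝ (Fin m)) : ℝ :=
  fderiv ℝ V x (EuclideanSpace.single j 1)

/-- `L` is a cross-block Lipschitz constant: changing only the off-`j` coordinates
changes `∂_j V` by at most `L` times the Euclidean distance. -/
def CrossLip {m : ℕ} (V : EuclideanSpace ℝ (Fin m) → ℝ) (L : ℝ) : Prop :=
  ∀ j : Fin m, ∀ x x' : EuclideanSpace ℝ (Fin m), x j = x' j →
    |pgrad V j x - pgrad V j x'| ≤ L * ‖x - x'‖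

/-- `Lc` is a coordinate-wise Lipschitz constant: changing only the `j`-th coordinate
changes `∂_j V` by at most `Lc` times the distance. -/
def CoordLip {m : ℕ} (V : EuclideanSpace ℝ (Fin m) → ℝ) (Lc : ℝ) : Prop :=
  ∀ j : Fin m, ∀ x x' : EuclideanSpace ℝ (Fin m), (∀ i, i ≠ j → x i = x' i) →
    |pgrad V j x - pgrad V j x'| ≤ Lc * ‖x - x'‖

/-! The Hessian `H` of a convex `C²` function is symmetric positive semidefinite. Changing only
coordinate `j` controls the diagonal, `H_jj ≤ L_c`, and Cauchy–Schwarz for `H` then gives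
`|H_ij| ≤ √(H_ii H_jj) ≤ L_c` for every entry. If `x` and `x'` agree in coordinate `j`, the mean
value inequality along the segment bounds `|∂_j V x - ∂_j V x'|` by `|∑_{i ≠ j} H_ij d_i|` with
`d = x - x'`, hence by `L_c ∑_{i ≠ j} |d_i| ≤ L_c √(m - 1) ‖d‖`. So `√(m - 1) L_c` is a cross-block
constant, and `L` is at most it by minimality. -/

open Finset

section Hessian

variable {E : Type*} [NormedAddCommGroup E] [NormedSpace ℝ E] {V : E → ℝ}

lemma hasDerivAt_fderiv_apply_add_smul {a d : E} {t : ℝ}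
    (hV : DifferentiableAt ℝ (fderiv ℝ V) (a + t • d)) (c : E) :
    HasDerivAt (fun s : ℝ => fderiv ℝ V (a + s • d) c)
      (fderiv ℝ (fderiv ℝ V) (a + t • d) d c) t := by
  have hline : HasDerivAt (fun s : ℝ => a + s • d) d t := by
    simpa using ((hasDerivAt_id t).smul_const d).const_add a
  simpa [Function.comp_def] using
    ((ContinuousLinearMap.apply ℝ ℝ c).hasFDerivAt.comp _ hV.hasFDerivAt).comp_hasDerivAt t hline

lemma ConvexOn.fderiv_fderiv_apply_self_nonneg (hconv : ConvexOn ℝ Set.univ V)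
    (hV : Differentiable ℝ V) {a : E} (hV2 : DifferentiableAt ℝ (fderiv ℝ V) a) (v : E) :
    0 ≤ fderiv ℝ (fderiv ℝ V) a v v := by
  have hline : ∀ t : ℝ, HasDerivAt (fun s : ℝ => V (a + s • v)) (fderiv ℝ V (a + t • v) v) t :=
    fun t => (hV _).hasFDerivAt.comp_hasDerivAt t
      (by simpa using ((hasDerivAt_id t).smul_const v).const_add a)
  have hconv_line : ConvexOn ℝ Set.univ (fun s : ℝ => V (a + s • v)) := by
    simpa [Function.comp_def, AffineMap.lineMap_apply, add_comm] using
      hconv.comp_affineMap (AffineMap.lineMap a (a + v))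
  have hmono : Monotone (fun s : ℝ => fderiv ℝ V (a + s • v) v) := by
    have h := hconv_line.monotoneOn_deriv fun s _ => (hline s).differentiableAt
    rwa [funext fun s => (hline s).deriv, monotoneOn_univ] at h
  have h0 := hasDerivAt_fderiv_apply_add_smul (a := a) (d := v) (t := 0) (by simpa using hV2) v
  simpa [h0.deriv] using hmono.deriv_nonneg (x := 0)

lemma abs_fderiv_apply_sub_le (hV : Differentiable ℝ (fderiv ℝ V)) {x x' : E} (c : E) {C : ℝ}
    (hC : ∀ t : ℝ, |fderiv ℝ (fderiv ℝ V) (x' + t • (x - x')) (x - x') c| ≤ C) :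
    |fderiv ℝ V x c - fderiv ℝ V x' c| ≤ C := by
  have h := norm_image_sub_le_of_norm_deriv_le_segment_01'
    (f := fun t : ℝ => fderiv ℝ V (x' + t • (x - x')) c)
    (fun t _ => (hasDerivAt_fderiv_apply_add_smul (hV _) c).hasDerivWithinAt)
    (fun t _ => (Real.norm_eq_abs _).trans_le (hC t))
  simpa using h

end Hessian

namespace EuclideanSpace

variable {ι : Type*} [Fintype ι]

lemma sum_abs_le_sqrt_card_mul_norm (x : EuclideanSpace ℝ ι) (s : Finset ι) :
    ∑ i ∈ s, |x i| ≤ √(#s : ℝ) * ‖x‖ := by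
  have hsq : ∑ i ∈ s, |x i| ^ 2 ≤ ‖x‖ ^ 2 := by
    rw [EuclideanSpace.real_norm_sq_eq]
    simpa only [sq_abs] using
      sum_le_sum_of_subset_of_nonneg (subset_univ s) fun i _ _ => sq_nonneg (x i)
  rw [← Real.sqrt_sq (norm_nonneg x), ← Real.sqrt_mul (Nat.cast_nonneg _),
    Real.le_sqrt (sum_nonneg fun i _ => abs_nonneg _) (by positivity)]
  exact sq_sum_le_card_mul_sum_sq.trans (mul_le_mul_of_nonneg_left hsq (Nat.cast_nonneg _))

lemma map_eq_sum_smul [DecidableEq ι] {M F : Type*} [AddCommMonoid M] [Module ℝ M]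
    [FunLike F (EuclideanSpace ℝ ι) M] [LinearMapClass F ℝ (EuclideanSpace ℝ ι) M]
    (f : F) (x : EuclideanSpace ℝ ι) : f x = ∑ i, x i • f (single i 1) := by
  conv_lhs => rw [← (basisFun ι ℝ).sum_repr x]
  simp [map_sum, map_smul]

end EuclideanSpace

open EuclideanSpace

variable {m : ℕ} {V : EuclideanSpace ℝ (Fin m) → ℝ} {Lc : ℝ}

namespace CoordLip

lemma nonneg (h : CoordLip V Lc) (j : Fin m) : 0 ≤ Lc := by
  have h1 := h j (single j 1) 0 fun i hi => by simp [hi]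
  simpa using (abs_nonneg _).trans h1

lemma abs_fderiv_fderiv_single_self_le (h : CoordLip V Lc) {a : EuclideanSpace ℝ (Fin m)}
    (hV : DifferentiableAt ℝ (fderiv ℝ V) a) (j : Fin m) :
    |fderiv ℝ (fderiv ℝ V) a (single j 1) (single j 1)| ≤ Lc := by
  have hderiv := hasDerivAt_fderiv_apply_add_smul (V := V) (a := a) (d := single j (1 : ℝ))
    (t := 0) (by simpa using hV) (single j 1)
  simp only [zero_smul, add_zero] at hderiv
  rw [← Real.norm_eq_abs]
  refine hderiv.le_of_lip' (h.nonneg j) (Filter.Eventually.of_forall fun s => ?_)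
  have h1 := h j (a + s • single j 1) a fun i hi => by simp [hi]
  simpa [pgrad, norm_smul] using h1

lemma abs_fderiv_fderiv_single_le (h : CoordLip V Lc) (hV : ContDiff ℝ 2 V)
    (hconv : ConvexOn ℝ Set.univ V) (a : EuclideanSpace ℝ (Fin m)) (i j : Fin m) :
    |fderiv ℝ (fderiv ℝ V) a (single i 1) (single j 1)| ≤ Lc := by
  set B := fderiv ℝ (fderiv ℝ V) a
  have hV2 : DifferentiableAt ℝ (fderiv ℝ V) a :=
    (hV.fderiv_right (m := 1) le_rfl).differentiable one_ne_zero a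
  have hpsd : ∀ v, 0 ≤ B v v :=
    hconv.fderiv_fderiv_apply_self_nonneg (hV.differentiable two_ne_zero) hV2
  have hsymm : B (single j 1) (single i 1) = B (single i 1) (single j 1) :=
    hV.contDiffAt.isSymmSndFDerivAt (by simp) _ _
  have hcs := LinearMap.BilinForm.apply_mul_apply_le_of_forall_zero_le
    B.toLinearMap₁₂ hpsd (single i 1) (single j 1)
  have hdiag (k : Fin m) : B (single k 1) (single k 1) ≤ Lc :=
    le_of_abs_le (h.abs_fderiv_fderiv_single_self_le hV2 k)
  refine abs_le_of_sq_le_sq ?_ (h.nonneg i)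
  calc B (single i 1) (single j 1) ^ 2
      = B (single i 1) (single j 1) * B (single j 1) (single i 1) := by rw [sq, hsymm]
    _ ≤ B (single i 1) (single i 1) * B (single j 1) (single j 1) := hcs
    _ ≤ Lc ^ 2 := by rw [sq]; exact mul_le_mul (hdiag i) (hdiag j) (hpsd _) (h.nonneg i)

end CoordLip

lemma CrossLip.of_coordLip (hV : ContDiff ℝ 2 V) (hconv : ConvexOn ℝ Set.univ V)
    (h : CoordLip V Lc) : CrossLip V (√((m : ℝ) - 1) * Lc) := by
  intro j x x' hx
  have hdj : (x - x') j = 0 := by simp [hx]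
  have hcard : (#(univ.erase j) : ℝ) = m - 1 := by
    rw [card_erase_of_mem (mem_univ j), card_univ, Fintype.card_fin,
      Nat.cast_sub (Nat.one_le_of_lt j.isLt), Nat.cast_one]
  refine abs_fderiv_apply_sub_le ((hV.fderiv_right (m := 1) le_rfl).differentiable one_ne_zero)
    _ fun t => ?_
  set d := x - x'
  set B := fderiv ℝ (fderiv ℝ V) (x' + t • d)
  calc |B d (single j 1)|
      = |∑ i ∈ univ.erase j, d i * B (single i 1) (single j 1)| := by
        rw [map_eq_sum_smul B d, sum_erase _ (by simp [hdj])]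
        simp
    _ ≤ ∑ i ∈ univ.erase j, |d i| * Lc := by
        refine (abs_sum_le_sum_abs _ _).trans (sum_le_sum fun i _ => ?_)
        rw [abs_mul]
        exact mul_le_mul_of_nonneg_left (h.abs_fderiv_fderiv_single_le hV hconv _ i j)
          (abs_nonneg _)
    _ ≤ √(#(univ.erase j) : ℝ) * ‖d‖ * Lc := by
        rw [← sum_mul]
        exact mul_le_mul_of_nonneg_right (sum_abs_le_sqrt_card_mul_norm d _) (h.nonneg j)
    _ = √((m : ℝ) - 1) * Lc * ‖x - x'‖ := by rw [hcard]; ring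

theorem stmt0_general {m : ℕ} (V : EuclideanSpace ℝ (Fin m) → ℝ)
    (hV : ContDiff ℝ 2 V) (hconv : ConvexOn ℝ Set.univ V)
    (L Lc : ℝ)
    (hLmin : ∀ L', CrossLip V L' → L ≤ L')
    (hLc : CoordLip V Lc) :
    L ≤ Real.sqrt ((m : ℝ) - 1) * Lc :=
  hLmin _ (CrossLip.of_coordLip hV hconv hLc)

/-- if `L` is the smallest cross-block Lipschitz constant and `Lc` the smallest
coordinate Lipschitz constant of the partial gradients of a twice continuously differentiable
convex `V : ℝ^m → ℝ`, then `L ≤ √(m-1) · Lc`. -/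
theorem stmt0 {m : ℕ} (hm : 2 ≤ m) (V : EuclideanSpace ℝ (Fin m) → ℝ)
    (hV : ContDiff ℝ 2 V) (hconv : ConvexOn ℝ Set.univ V)
    (L Lc : ℝ)
    (hL : CrossLip V L) (hLmin : ∀ L', CrossLip V L' → L ≤ L')
    (hLc : CoordLip V Lc) (hLcmin : ∀ L', CoordLip V L' → Lc ≤ L') :
    L ≤ Real.sqrt ((m : ℝ) - 1) * Lc :=
  stmt0_general V hV hconv L Lc hLmin hLc
end

section
/- Let V: ℝ^m → ℝ be twice continuously differentiable and convex. Let L be the smallest constant such that ‖∇_j V(x_j, x_{-j}) - ∇_j V(x_j, x'_{-j})‖ ≤ L‖x_{-j} - x'_{-j}‖ for all j, and let L_r be the smallest constant such that ‖∇V(y_j, x_{-j}) - ∇V(z_j, x_{-j})‖ ≤ L_r‖y_j - z_j‖ for all j. Then L ≤ √(1 - 1/m) · L_r. -/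
/-- `Lr` is a restricted Lipschitz constant: changing only the `j`-th coordinate
changes the full gradient `∇V` by at most `Lr` times the distance. -/
def RestrLip {m : ℕ} (V : EuclideanSpace ℝ (Fin m) → ℝ) (Lr : ℝ) : Prop :=
  ∀ j : Fin m, ∀ x x' : EuclideanSpace ℝ (Fin m), (∀ i, i ≠ j → x i = x' i) →
    ‖gradient V x - gradient V x'‖ ≤ Lr * ‖x - x'‖

/-!
The Hessian `H = ∇²V x` is positive semidefinite by convexity, and each column `H eᵢ` has norm at
most `Lr`, so `‖H‖ ≤ √m · Lr`. Cauchy–Schwarz for the form `⟪H ·, ·⟫` gives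
`‖H eⱼ‖² ≤ ‖H‖ · Hⱼⱼ`, and maximising `‖H eⱼ‖² - Hⱼⱼ²` under these two constraints bounds the
off-diagonal part of the column by `(1 - 1/m) · Lr²`. Moving `x` orthogonally to `eⱼ` changes
`∂ⱼV` at a rate given by exactly this off-diagonal part, so the mean value theorem makes
`√(1 - 1/m) · Lr` a cross-block Lipschitz constant.
-/

open scoped RealInnerProductSpace
open InnerProductSpace AffineMap Set

theorem sq_sub_sq_le_of_sq_le_sqrt_mul {m a p c : ℝ} (hm : 2 ≤ m) (ha : 0 ≤ a) (hap : a ≤ p)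
    (hpc : p ≤ c) (hp : p ^ 2 ≤ √m * c * a) :
    p ^ 2 - a ^ 2 ≤ (1 - 1 / m) * c ^ 2 := by
  have hmpos : 0 < m := by linarith
  have hma : m * a ^ 2 = (√m * a) ^ 2 := by rw [mul_pow, Real.sq_sqrt hmpos.le]
  rw [one_sub_div hmpos.ne', div_mul_eq_mul_div, le_div_iff₀ hmpos]
  rcases le_or_gt (√m * a) c with hsa | hsa
  · -- `√m * c * a - a ^ 2` increases with `a` up to `a = c / √m`, where it equals `(1 - 1/m) c²`
    have hfac : 0 ≤ (c - √m * a) * ((m - 1) * c - √m * a) :=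
      mul_nonneg (by linarith) (by nlinarith)
    nlinarith
  · have hpc2 : p ^ 2 ≤ c ^ 2 := pow_le_pow_left₀ (by linarith) hpc 2
    have hca : c ^ 2 ≤ m * a ^ 2 := by rw [hma]; exact pow_le_pow_left₀ (by linarith) hsa.le 2
    nlinarith

namespace ContinuousLinearMap

variable {E : Type*} [NormedAddCommGroup E] [InnerProductSpace ℝ E] {T : E →L[ℝ] E}

theorem IsPositive.norm_apply_sq_le (hT : T.IsPositive) (x : E) :
    ‖T x‖ ^ 2 ≤ ‖T‖ * ⟪T x, x⟫ := by
  have hcs := LinearMap.BilinForm.apply_mul_apply_le_of_forall_zero_le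
    ((innerₗ E) ∘ₗ (T : E →ₗ[ℝ] E)) hT.inner_nonneg_left x (T x)
  simp only [LinearMap.comp_apply, coe_coe, innerₗ_apply_apply] at hcs
  rw [hT.inner_left_eq_inner_right (T x) x, real_inner_self_eq_norm_sq] at hcs
  have hTT : ⟪T (T x), T x⟫ ≤ ‖T‖ * ‖T x‖ ^ 2 := by
    calc ⟪T (T x), T x⟫ ≤ ‖T (T x)‖ * ‖T x‖ := real_inner_le_norm _ _
      _ ≤ ‖T‖ * ‖T x‖ * ‖T x‖ := by gcongr; exact T.le_opNorm _
      _ = ‖T‖ * ‖T x‖ ^ 2 := by ring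
  rcases (sq_nonneg ‖T x‖).eq_or_lt with h0 | hpos
  · rw [← h0]
    exact mul_nonneg (norm_nonneg T) (hT.inner_nonneg_left x)
  · nlinarith [hT.inner_nonneg_left x]

variable {ι : Type*} [Fintype ι]

theorem opNorm_le_sqrt_card_mul_of_norm_apply_basis_le (b : OrthonormalBasis ι ℝ E)
    (hT : (T : E →ₗ[ℝ] E).IsSymmetric) {c : ℝ} (hc : 0 ≤ c) (hcol : ∀ i, ‖T (b i)‖ ≤ c) :
    ‖T‖ ≤ √(Fintype.card ι) * c := by
  refine T.opNorm_le_bound (by positivity) fun v => ?_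
  have hsq : ‖T v‖ ^ 2 ≤ (√(Fintype.card ι) * c * ‖v‖) ^ 2 := by
    calc ‖T v‖ ^ 2 = ∑ i, ⟪b i, T v⟫ ^ 2 := (b.sum_sq_inner_right _).symm
      _ ≤ ∑ _i : ι, (c * ‖v‖) ^ 2 := by
        refine Finset.sum_le_sum fun i _ => ?_
        rw [← hT.apply_clm, ← sq_abs]
        refine pow_le_pow_left₀ (abs_nonneg _) ?_ 2
        calc |⟪T (b i), v⟫| ≤ ‖T (b i)‖ * ‖v‖ := abs_real_inner_le_norm _ _
          _ ≤ c * ‖v‖ := by gcongr; exact hcol i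
      _ = (√(Fintype.card ι) * c * ‖v‖) ^ 2 := by
        rw [Finset.sum_const, Finset.card_univ, nsmul_eq_mul]
        linear_combination (c * ‖v‖) ^ 2 * (Real.sq_sqrt (Nat.cast_nonneg (Fintype.card ι))).symm
  exact (pow_le_pow_iff_left₀ (norm_nonneg _) (by positivity) two_ne_zero).1 hsq

theorem IsPositive.norm_sub_inner_smul_le (b : OrthonormalBasis ι ℝ E) (hT : T.IsPositive)
    (hcard : 2 ≤ Fintype.card ι) {c : ℝ} (hcol : ∀ i, ‖T (b i)‖ ≤ c) (j : ι) :
    ‖T (b j) - ⟪T (b j), b j⟫ • b j‖ ≤ √(1 - 1 / Fintype.card ι) * c := by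
  set p := T (b j)
  set a := ⟪p, b j⟫
  have hbj : ‖b j‖ = 1 := b.orthonormal.1 j
  have hc : 0 ≤ c := (norm_nonneg _).trans (hcol j)
  have ha : 0 ≤ a := hT.inner_nonneg_left (b j)
  have hap : a ≤ ‖p‖ := by simpa [hbj] using real_inner_le_norm p (b j)
  have hp : ‖p‖ ^ 2 ≤ √(Fintype.card ι) * c * a :=
    (hT.norm_apply_sq_le (b j)).trans <| mul_le_mul_of_nonneg_right
      (opNorm_le_sqrt_card_mul_of_norm_apply_basis_le b hT.isSymmetric hc hcol) ha
  have hsq : ‖p - a • b j‖ ^ 2 = ‖p‖ ^ 2 - a ^ 2 := by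
    rw [norm_sub_sq_real, real_inner_smul_right, norm_smul, hbj, Real.norm_eq_abs, mul_one, sq_abs]
    ring
  have hm : (2 : ℝ) ≤ Fintype.card ι := by exact_mod_cast hcard
  have hfac : 0 ≤ 1 - 1 / (Fintype.card ι : ℝ) := by
    rw [sub_nonneg, div_le_one (by linarith)]; linarith
  refine (pow_le_pow_iff_left₀ (norm_nonneg _) (by positivity) two_ne_zero).1 ?_
  rw [hsq, mul_pow, Real.sq_sqrt hfac]
  exact sq_sub_sq_le_of_sq_le_sqrt_mul hm ha hap (hcol j) hp

end ContinuousLinearMap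

theorem ConvexOn.monotone_fderiv_lineMap {F : Type*} [NormedAddCommGroup F] [NormedSpace ℝ F]
    {f : F → ℝ} (hf : ConvexOn ℝ univ f) (hd : Differentiable ℝ f) (x y : F) :
    Monotone fun t : ℝ => fderiv ℝ f (lineMap x y t) (y - x) := by
  have hline (t : ℝ) : HasDerivAt (f ∘ lineMap x y) (fderiv ℝ f (lineMap x y t) (y - x)) t :=
    (hd _).hasFDerivAt.comp_hasDerivAt t hasDerivAt_lineMap
  have hconv : ConvexOn ℝ univ (f ∘ lineMap x y) := hf.comp_affineMap (lineMap x y)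
  intro s t hst
  have h := hconv.monotoneOn_deriv (fun r _ => (hline r).differentiableAt) (mem_univ s)
    (mem_univ t) hst
  rwa [(hline s).deriv, (hline t).deriv] at h

section Hessian

variable {E : Type*} [NormedAddCommGroup E] [InnerProductSpace ℝ E] [CompleteSpace E]
  {V : E → ℝ}

noncomputable def hessian (V : E → ℝ) (x : E) : E →L[ℝ] E :=
  (toDual ℝ E).symm.toContinuousLinearEquiv.toContinuousLinearMap.comp (fderiv ℝ (fderiv ℝ V) x)

theorem inner_hessian_apply (x u w : E) :
    ⟪hessian V x u, w⟫ = fderiv ℝ (fderiv ℝ V) x u w :=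
  toDual_symm_apply

theorem hasFDerivAt_gradient {x : E} (hV : DifferentiableAt ℝ (fderiv ℝ V) x) :
    HasFDerivAt (gradient V) (hessian V x) x :=
  (toDual ℝ E).symm.toContinuousLinearEquiv.hasFDerivAt.comp x hV.hasFDerivAt

theorem isPositive_hessian (hV : ContDiff ℝ 2 V) (hconv : ConvexOn ℝ univ V) (x : E) :
    (hessian V x).IsPositive := by
  have hD : Differentiable ℝ (fderiv ℝ V) := (hV.fderiv_right le_rfl).differentiable one_ne_zero
  refine (ContinuousLinearMap.isPositive_iff _).2 ⟨fun u w => ?_, fun v => ?_⟩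
  · rw [ContinuousLinearMap.coe_coe, inner_hessian_apply, real_inner_comm, inner_hessian_apply]
    exact hV.contDiffAt.isSymmSndFDerivAt (by simp [minSmoothness_of_isRCLikeNormedField]) u w
  · have hmono := hconv.monotone_fderiv_lineMap (hV.differentiable (by simp)) x (x + v)
    have hderiv : HasDerivAt (fun t : ℝ => fderiv ℝ V (lineMap x (x + v) t) (x + v - x))
        (fderiv ℝ (fderiv ℝ V) x v v) 0 := by
      have h := (hD x).hasFDerivAt.comp_hasDerivAt_of_eq 0 hasDerivAt_lineMap
        (lineMap_apply_zero x (x + v)).symm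
      simpa [Function.comp_def] using
        (ContinuousLinearMap.apply ℝ ℝ (x + v - x)).hasFDerivAt.comp_hasDerivAt 0 h
    rw [inner_hessian_apply, ← hderiv.deriv]
    exact hmono.deriv_nonneg

end Hessian

section Euclidean

variable {m : ℕ} {V : EuclideanSpace ℝ (Fin m) → ℝ} {Lr : ℝ}

theorem RestrLip.nonneg (h : RestrLip V Lr) (j : Fin m) : 0 ≤ Lr := by
  have h0 := h j 0 (EuclideanSpace.single j 1) fun i hi => by simp [hi]
  rw [zero_sub, norm_neg, PiLp.norm_single, norm_one, mul_one] at h0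
  exact (norm_nonneg _).trans h0

theorem RestrLip.norm_hessian_single_le (h : RestrLip V Lr) {z : EuclideanSpace ℝ (Fin m)}
    (hV : DifferentiableAt ℝ (fderiv ℝ V) z) (j : Fin m) :
    ‖hessian V z (EuclideanSpace.single j 1)‖ ≤ Lr := by
  set e := EuclideanSpace.single j (1 : ℝ)
  have hderiv : HasDerivAt (fun t : ℝ => gradient V (lineMap z (z + e) t)) (hessian V z e) 0 := by
    simpa [Function.comp_def] using (hasFDerivAt_gradient hV).comp_hasDerivAt_of_eq 0
      hasDerivAt_lineMap (lineMap_apply_zero z (z + e)).symm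
  refine hderiv.le_of_lip' (h.nonneg j) (Filter.Eventually.of_forall fun t => ?_)
  have hsub : lineMap z (z + e) t - lineMap z (z + e) (0 : ℝ) = t • e := by
    rw [lineMap_apply_zero, ← vsub_eq_sub, lineMap_vsub_left, vsub_eq_sub, add_sub_cancel_left]
  have hlip := h j (lineMap z (z + e) t) (lineMap z (z + e) (0 : ℝ)) fun i hi => by
    rw [← sub_eq_zero, ← PiLp.sub_apply, hsub]
    simp [e, hi]
  rw [hsub, norm_smul, PiLp.norm_single, norm_one, mul_one] at hlip
  rwa [sub_zero]

theorem RestrLip.crossLip (h : RestrLip V Lr) (hm : 2 ≤ m) (hV : ContDiff ℝ 2 V)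
    (hconv : ConvexOn ℝ univ V) : CrossLip V (√(1 - 1 / m) * Lr) := by
  have hD : Differentiable ℝ (fderiv ℝ V) := (hV.fderiv_right le_rfl).differentiable one_ne_zero
  intro j x x' hxj
  set e := EuclideanSpace.single j (1 : ℝ)
  have hoff (y) : ‖hessian V y e - ⟪hessian V y e, e⟫ • e‖ ≤ √(1 - 1 / m) * Lr := by
    simpa [e] using (isPositive_hessian hV hconv y).norm_sub_inner_smul_le
      (EuclideanSpace.basisFun (Fin m) ℝ) (by simpa using hm)
      (fun i => by simpa using h.norm_hessian_single_le (hD y) i) j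
  have hbound (y) : ‖⟪e, hessian V y (x - x')⟫‖ ≤ √(1 - 1 / m) * Lr * ‖x - x'‖ := by
    have he : ⟪e, x - x'⟫ = 0 := by simp [e, EuclideanSpace.inner_single_left, hxj]
    calc ‖⟪e, hessian V y (x - x')⟫‖
        = |⟪hessian V y e - ⟪hessian V y e, e⟫ • e, x - x'⟫| := by
          rw [inner_sub_left, real_inner_smul_left, he, mul_zero, sub_zero,
            (isPositive_hessian hV hconv y).inner_left_eq_inner_right, Real.norm_eq_abs]
      _ ≤ ‖hessian V y e - ⟪hessian V y e, e⟫ • e‖ * ‖x - x'‖ := abs_real_inner_le_norm _ _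
      _ ≤ √(1 - 1 / m) * Lr * ‖x - x'‖ := by gcongr; exact hoff y
  have hpgrad : pgrad V j = fun y => ⟪e, gradient V y⟫ := by
    ext y
    rw [real_inner_comm, inner_gradient_left]
    rfl
  have hderiv (t : ℝ) : HasDerivAt (fun t => pgrad V j (lineMap x' x t))
      ⟪e, hessian V (lineMap x' x t) (x - x')⟫ t := by
    rw [hpgrad]
    exact (innerSL ℝ e).hasFDerivAt.comp_hasDerivAt t
      ((hasFDerivAt_gradient (hD _)).comp_hasDerivAt t hasDerivAt_lineMap)
  simpa [Real.norm_eq_abs] using norm_image_sub_le_of_norm_deriv_le_segment_01'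
    (fun t _ => (hderiv t).hasDerivWithinAt) (fun t _ => hbound _)

end Euclidean

theorem stmt1_general {m : ℕ} (hm : 2 ≤ m) (V : EuclideanSpace ℝ (Fin m) → ℝ)
    (hV : ContDiff ℝ 2 V) (hconv : ConvexOn ℝ Set.univ V)
    (L Lr : ℝ)
    (hLmin : ∀ L', CrossLip V L' → L ≤ L')
    (hLr : RestrLip V Lr) :
    L ≤ Real.sqrt (1 - 1 / (m : ℝ)) * Lr :=
  hLmin _ (hLr.crossLip hm hV hconv)

/-- for a twice continuously differentiable convex `V : ℝ^m → ℝ`, if `L` is the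
smallest cross-block Lipschitz constant of the partial gradients and `Lr` the smallest
restricted Lipschitz constant of the full gradient, then `L ≤ √(1 - 1/m) · Lr`. -/
theorem stmt1 {m : ℕ} (hm : 2 ≤ m) (V : EuclideanSpace ℝ (Fin m) → ℝ)
    (hV : ContDiff ℝ 2 V) (hconv : ConvexOn ℝ Set.univ V)
    (L Lr : ℝ)
    (hL : CrossLip V L) (hLmin : ∀ L', CrossLip V L' → L ≤ L')
    (hLr : RestrLip V Lr) (hLrmin : ∀ L', RestrLip V L' → Lr ≤ L') :
    L ≤ Real.sqrt (1 - 1 / (m : ℝ)) * Lr :=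
  stmt1_general hm V hV hconv L Lr hLmin hLr
end

section
/- Let 0 < α < 1 and m ≥ 2, and define V(x) = ((1-α)/2)‖x‖² + (α/2)(x_1 + ⋯ + x_m)² on ℝ^m. For step size τ > 0, define the parallel proximal coordinate update x_j^{k+1} = argmin_{x_j ∈ ℝ} { V(x_j, x_{-j}^k) + (x_j - x_j^k)²/(2τ) }. Then the sum s^k = x_1^k + ⋯ + x_m^k satisfies s^k = ((τ^{-1} - (m-1)α)/(1 + τ^{-1}))^k · s^0 for all k ≥ 0. -/
/-!
Each proximal coordinate step minimises, in the single variable `t = x_j`, the quadratic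
`V(x^k with x_j := t) + (t - x_j^k)² / (2τ)`, whose leading coefficient is `(1 + τ⁻¹)/2 > 0`.
Its unique minimiser is `x_j^{k+1} = ((τ⁻¹ + α) x_j^k - α s^k) / (1 + τ⁻¹)`, an affine function
of `x_j^k` and `s^k`; summing over the `m` coordinates gives
`s^{k+1} = (τ⁻¹ - (m-1)α) / (1 + τ⁻¹) · s^k`.
-/

open Finset Function

lemma eq_of_forall_quadratic_le {a b y : ℝ} (ha : 0 < a)
    (h : ∀ t, a * y ^ 2 + b * y ≤ a * t ^ 2 + b * t) : y = -b / (2 * a) := by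
  have hmin := h (-b / (2 * a))
  have hsq : a * (y + b / (2 * a)) ^ 2
      = (a * y ^ 2 + b * y) - (a * (-b / (2 * a)) ^ 2 + b * (-b / (2 * a))) := by
    field_simp
    ring
  have hzero : (y + b / (2 * a)) ^ 2 = 0 :=
    le_antisymm (nonpos_of_mul_nonpos_right (by linarith) ha) (sq_nonneg _)
  rw [neg_div]
  linarith [pow_eq_zero_iff (n := 2) two_ne_zero |>.mp hzero]

section ProximalStep

variable {ι : Type*} [Fintype ι]

lemma sum_proximal_step_eq {α τ : ℝ} (hτ : 0 < τ) (y y' : ι → ℝ)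
    (hy' : ∀ j, y' j = (y j * (τ⁻¹ + α) - α * ∑ i, y i) / (1 + τ⁻¹)) :
    ∑ j, y' j = (τ⁻¹ - ((Fintype.card ι : ℝ) - 1) * α) / (1 + τ⁻¹) * ∑ j, y j := by
  have hpos : 0 < 1 + τ⁻¹ := by positivity
  simp only [hy', ← sum_div, sum_sub_distrib, ← sum_mul, sum_const, card_univ, nsmul_eq_mul]
  field_simp
  ring

variable [DecidableEq ι]

lemma sum_update_eq (y : ι → ℝ) (j : ι) (t : ℝ) :
    ∑ i, update y j t i = t + (∑ i, y i - y j) := by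
  rw [sum_update_of_mem (mem_univ j), sum_sdiff_eq_sub (subset_univ {j}), sum_singleton]

lemma sum_sq_update_eq (y : ι → ℝ) (j : ι) (t : ℝ) :
    ∑ i, update y j t i ^ 2 = t ^ 2 + (∑ i, y i ^ 2 - y j ^ 2) := by
  simp_rw [apply_update (fun _ s => s ^ 2) y j t]
  exact sum_update_eq _ j _

lemma exists_proximal_objective_eq_quadratic (α τ : ℝ) (y : ι → ℝ) (j : ι) :
    ∃ c : ℝ, ∀ t : ℝ,
      (1 - α) / 2 * ∑ i, update y j t i ^ 2 + α / 2 * (∑ i, update y j t i) ^ 2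
          + (t - y j) ^ 2 / (2 * τ)
        = (1 + τ⁻¹) / 2 * t ^ 2 + (α * (∑ i, y i - y j) - τ⁻¹ * y j) * t + c := by
  refine ⟨(1 - α) / 2 * (∑ i, y i ^ 2 - y j ^ 2) + α / 2 * (∑ i, y i - y j) ^ 2
      + τ⁻¹ / 2 * y j ^ 2, fun t => ?_⟩
  rw [sum_update_eq, sum_sq_update_eq, div_eq_mul_inv _ (2 * τ), mul_inv]
  ring

lemma proximal_coordinate_eq {α τ : ℝ} (hτ : 0 < τ) {V : (ι → ℝ) → ℝ}
    (hV : ∀ y, V y = (1 - α) / 2 * ∑ j, (y j) ^ 2 + α / 2 * (∑ j, y j) ^ 2)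
    (y : ι → ℝ) (j : ι) {z : ℝ}
    (hz : ∀ t : ℝ, V (update y j z) + (z - y j) ^ 2 / (2 * τ)
      ≤ V (update y j t) + (t - y j) ^ 2 / (2 * τ)) :
    z = (y j * (τ⁻¹ + α) - α * ∑ i, y i) / (1 + τ⁻¹) := by
  obtain ⟨c, hc⟩ := exists_proximal_objective_eq_quadratic α τ y j
  have hquad : ∀ t, (1 + τ⁻¹) / 2 * z ^ 2 + (α * (∑ i, y i - y j) - τ⁻¹ * y j) * z
      ≤ (1 + τ⁻¹) / 2 * t ^ 2 + (α * (∑ i, y i - y j) - τ⁻¹ * y j) * t := fun t => by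
    have := hz t
    rw [hV, hV, hc, hc] at this
    linarith
  have hpos : 0 < (1 + τ⁻¹) / 2 := by positivity
  rw [eq_of_forall_quadratic_le hpos hquad]
  field_simp
  ring

end ProximalStep

theorem stmt2_general {m : ℕ} (α τ : ℝ) (hτ : 0 < τ)
    (V : (Fin m → ℝ) → ℝ)
    (hV : ∀ y, V y = (1 - α) / 2 * ∑ j, (y j) ^ 2 + α / 2 * (∑ j, y j) ^ 2)
    (x : ℕ → Fin m → ℝ)
    (hupd : ∀ k, ∀ j, ∀ t : ℝ,
      V (Function.update (x k) j (x (k + 1) j)) + (x (k + 1) j - x k j) ^ 2 / (2 * τ)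
        ≤ V (Function.update (x k) j t) + (t - x k j) ^ 2 / (2 * τ)) :
    ∀ k : ℕ, (∑ j, x k j) = ((τ⁻¹ - ((m : ℝ) - 1) * α) / (1 + τ⁻¹)) ^ k * ∑ j, x 0 j := by
  have hstep : ∀ k, ∑ j, x (k + 1) j
      = (τ⁻¹ - ((m : ℝ) - 1) * α) / (1 + τ⁻¹) * ∑ j, x k j := fun k => by
    simpa using sum_proximal_step_eq hτ (x k) (x (k + 1))
      fun j => proximal_coordinate_eq hτ hV (x k) j (hupd k j)
  intro k
  induction k with
  | zero => simp
  | succ k ih => rw [hstep, ih, pow_succ', mul_assoc]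

/-- for `V(x) = (1-α)/2 ‖x‖² + (α/2)(x₁+⋯+x_m)²` and the parallel proximal
coordinate update with step size `τ`, the coordinate sum satisfies
`s^k = ((τ⁻¹ - (m-1)α)/(1+τ⁻¹))^k s^0`. -/
theorem stmt2 {m : ℕ} (hm : 2 ≤ m) (α τ : ℝ) (hα0 : 0 < α) (hα1 : α < 1) (hτ : 0 < τ)
    (V : (Fin m → ℝ) → ℝ)
    (hV : ∀ y, V y = (1 - α) / 2 * ∑ j, (y j) ^ 2 + α / 2 * (∑ j, y j) ^ 2)
    (x : ℕ → Fin m → ℝ)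
    (hupd : ∀ k, ∀ j, ∀ t : ℝ,
      V (Function.update (x k) j (x (k + 1) j)) + (x (k + 1) j - x k j) ^ 2 / (2 * τ)
        ≤ V (Function.update (x k) j t) + (t - x k j) ^ 2 / (2 * τ)) :
    ∀ k : ℕ, (∑ j, x k j) = ((τ⁻¹ - ((m : ℝ) - 1) * α) / (1 + τ⁻¹)) ^ k * ∑ j, x 0 j :=
  stmt2_general α τ hτ V hV x hupd
end

section
/- Let {x_k}_{k≥0} and {ξ_k}_{k≥1} be nonnegative sequences with x_k ≤ A x_{k-1} + B ξ_k for all k ≥ 1, where 0 < A < 1 and B > 0. If ξ_k ≤ ξ k^{-α} for some ξ ≥ 0 and α ≥ 0, then there exists a constant C depending only on α and A such that x_k ≤ A^k x_0 + C B ξ / k^α for all k ≥ 1. -/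
/-!
Unrolling the recursion gives `x k ≤ A ^ k * x 0 + B * ∑ i < k, A ^ i * ξs (k - i)`.
For `i < k` we have `k ≤ (k - i) * (i + 1)`, hence `(k - i) ^ (-α) ≤ (i + 1) ^ α * k ^ (-α)`,
so the sum is at most `ξ * k ^ (-α) * ∑ i, (i + 1) ^ α * A ^ i`; the convergent series
`C = ∑' i, (i + 1) ^ α * A ^ i` depends only on `α` and `A`.
-/

open Finset

theorem le_pow_mul_add_sum_of_le_mul_add {R : Type*} [CommSemiring R] [PartialOrder R]
    [IsOrderedRing R] {A : R} (hA : 0 ≤ A) {x e : ℕ → R}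
    (hrec : ∀ k, x (k + 1) ≤ A * x k + e (k + 1)) (k : ℕ) :
    x k ≤ A ^ k * x 0 + ∑ i ∈ range k, A ^ i * e (k - i) := by
  induction k with
  | zero => simp
  | succ k ih =>
    calc x (k + 1) ≤ A * x k + e (k + 1) := hrec k
      _ ≤ A * (A ^ k * x 0 + ∑ i ∈ range k, A ^ i * e (k - i)) + e (k + 1) := by gcongr
      _ = A ^ (k + 1) * x 0 + ∑ i ∈ range (k + 1), A ^ i * e (k + 1 - i) := by
        simp only [sum_range_succ', mul_add, mul_sum, pow_succ', Nat.add_sub_add_right,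
          pow_zero, one_mul, Nat.sub_zero, mul_assoc, add_assoc]

theorem Nat.le_sub_mul_succ {i k : ℕ} (h : i < k) : k ≤ (k - i) * (i + 1) := by
  obtain ⟨m, rfl⟩ := Nat.exists_eq_add_of_lt h
  rw [show i + m + 1 - i = m + 1 by omega]
  nlinarith

theorem inv_rpow_sub_le_succ_rpow_div {α : ℝ} (hα : 0 ≤ α) {i k : ℕ} (h : i < k) :
    (((k - i : ℕ) : ℝ) ^ α)⁻¹ ≤ ((i : ℝ) + 1) ^ α / (k : ℝ) ^ α := by
  have hki : (0 : ℝ) < (k - i : ℕ) := by exact_mod_cast Nat.sub_pos_of_lt h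
  have hk : (0 : ℝ) < k := by exact_mod_cast Nat.zero_lt_of_lt h
  rw [le_div_iff₀ (by positivity), inv_mul_le_iff₀ (by positivity), ← Real.mul_rpow hki.le
    (by positivity)]
  gcongr
  exact_mod_cast Nat.le_sub_mul_succ h

theorem summable_succ_rpow_mul_geometric {r : ℝ} (hr0 : 0 ≤ r) (hr1 : r < 1) (α : ℝ) :
    Summable fun i : ℕ ↦ ((i : ℝ) + 1) ^ α * r ^ i := by
  set n := ⌈α⌉₊
  refine .of_nonneg_of_le (fun i ↦ by positivity) (fun i ↦ ?_)
    ((summable_choose_mul_geometric_of_norm_lt_one n (r := r)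
      (by rwa [Real.norm_of_nonneg hr0])).mul_left (n.factorial : ℝ))
  have hpow : ((i : ℝ) + 1) ^ α ≤ ((i : ℝ) + 1) ^ n := by
    rw [← Real.rpow_natCast]
    exact Real.rpow_le_rpow_of_exponent_le (by linarith [i.cast_nonneg (α := ℝ)]) (Nat.le_ceil α)
  have hchoose := Nat.pow_le_choose (α := ℝ) n (i + n)
  rw [div_le_iff₀' (by positivity), show i + n + 1 - n = i + 1 by omega] at hchoose
  push_cast at hchoose
  calc ((i : ℝ) + 1) ^ α * r ^ i ≤ ((i : ℝ) + 1) ^ n * r ^ i := by gcongr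
    _ ≤ n.factorial * (i + n).choose n * r ^ i := by gcongr
    _ = n.factorial * ((i + n).choose n * r ^ i) := by ring

theorem sum_geometric_mul_le_tsum_mul_div_rpow {A α ξ : ℝ} (hA0 : 0 ≤ A) (hA1 : A < 1)
    (hα : 0 ≤ α) (hξ : 0 ≤ ξ) {e : ℕ → ℝ} (he : ∀ j, 1 ≤ j → e j ≤ ξ / (j : ℝ) ^ α) (k : ℕ) :
    ∑ i ∈ range k, A ^ i * e (k - i) ≤
      (∑' i : ℕ, ((i : ℝ) + 1) ^ α * A ^ i) * ξ / (k : ℝ) ^ α := by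
  calc ∑ i ∈ range k, A ^ i * e (k - i)
      ≤ ∑ i ∈ range k, A ^ i * (ξ * (((i : ℝ) + 1) ^ α / (k : ℝ) ^ α)) := by
        refine sum_le_sum fun i hi ↦ ?_
        have hik := mem_range.mp hi
        gcongr
        calc e (k - i) ≤ ξ / ((k - i : ℕ) : ℝ) ^ α := he _ (by omega)
          _ ≤ ξ * (((i : ℝ) + 1) ^ α / (k : ℝ) ^ α) := by
            rw [div_eq_mul_inv]
            exact mul_le_mul_of_nonneg_left (inv_rpow_sub_le_succ_rpow_div hα hik) hξ
    _ = (∑ i ∈ range k, ((i : ℝ) + 1) ^ α * A ^ i) * ξ / (k : ℝ) ^ α := by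
        rw [sum_mul, sum_div]
        exact sum_congr rfl fun i _ ↦ by ring
    _ ≤ (∑' i : ℕ, ((i : ℝ) + 1) ^ α * A ^ i) * ξ / (k : ℝ) ^ α := by
        gcongr
        exact (summable_succ_rpow_mul_geometric hA0 hA1 α).sum_le_tsum _
          fun i _ ↦ by positivity

/-- for nonnegative sequences with `x_k ≤ A x_{k-1} + B ξ_k` and polynomially
decaying errors `ξ_k ≤ ξ k^{-α}`, there is a constant `C` depending only on `α` and `A`
with `x_k ≤ A^k x_0 + C B ξ / k^α` for all `k ≥ 1`. -/
theorem stmt7 (A α : ℝ) (hA0 : 0 < A) (hA1 : A < 1) (hα : 0 ≤ α) :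
    ∃ C : ℝ, 0 < C ∧ ∀ (B ξ : ℝ), 0 < B → 0 ≤ ξ →
      ∀ (x ξs : ℕ → ℝ), (∀ k, 0 ≤ x k) → (∀ k, 1 ≤ k → 0 ≤ ξs k) →
        (∀ k, x (k + 1) ≤ A * x k + B * ξs (k + 1)) →
        (∀ k : ℕ, 1 ≤ k → ξs k ≤ ξ / (k : ℝ) ^ α) →
        ∀ k : ℕ, 1 ≤ k → x k ≤ A ^ k * x 0 + C * B * ξ / (k : ℝ) ^ α := by
  have hsum := summable_succ_rpow_mul_geometric hA0.le hA1 α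
  refine ⟨∑' i : ℕ, ((i : ℝ) + 1) ^ α * A ^ i,
    hsum.tsum_pos (fun i ↦ by positivity) 0 (by simp), ?_⟩
  intro B ξ hB hξ x ξs _ _ hrec hdecay k _
  have hBξs : ∀ j, 1 ≤ j → B * ξs j ≤ B * ξ / (j : ℝ) ^ α := fun j hj ↦ by
    rw [mul_div_assoc]
    exact mul_le_mul_of_nonneg_left (hdecay j hj) hB.le
  calc x k ≤ A ^ k * x 0 + ∑ i ∈ range k, A ^ i * (B * ξs (k - i)) :=
        le_pow_mul_add_sum_of_le_mul_add (e := fun j ↦ B * ξs j) hA0.le hrec k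
    _ ≤ A ^ k * x 0 + (∑' i : ℕ, ((i : ℝ) + 1) ^ α * A ^ i) * (B * ξ) / (k : ℝ) ^ α := by
        gcongr
        exact sum_geometric_mul_le_tsum_mul_div_rpow hA0.le hA1 hα (by positivity) hBξs k
    _ = _ := by ring
end

section
/- Let {x_k}_{k≥0} and {ξ_k}_{k≥1} be nonnegative sequences with {ξ_k} non-increasing, and suppose there exist constants A, B, C > 0 such that A x_k² + (1 - B ξ_k) x_k ≤ x_{k-1} + C ξ_k² for all k ≥ 1. If ξ_k ≤ ξ/k^α for some ξ > 0 and α > 0, then there exists a constant K = K(α, ξ, A, B, C) > 0 such that x_k ≤ K / k^{min{1, α}} for all k ≥ 1. -/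
set_option maxHeartbeats 1000000


/-- for nonnegative sequences with `ξ` non-increasing,
`A x_k² + (1 - B ξ_k) x_k ≤ x_{k-1} + C ξ_k²` and `ξ_k ≤ ξ/k^α`, there exists
`K = K(α, ξ, A, B, C) > 0` such that `x_k ≤ K / k^{min{1,α}}` for all `k ≥ 1`. -/
theorem stmt9 (A B C ξ α : ℝ) (hA : 0 < A) (hB : 0 < B) (hC : 0 < C)
    (hξ : 0 < ξ) (hα : 0 < α)
    (x ξs : ℕ → ℝ) (hx : ∀ k, 0 ≤ x k) (hξs : ∀ k, 1 ≤ k → 0 ≤ ξs k)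
    (hmono : ∀ k, 1 ≤ k → ξs (k + 1) ≤ ξs k)
    (hrec : ∀ k, A * (x (k + 1)) ^ 2 + (1 - B * ξs (k + 1)) * x (k + 1)
      ≤ x k + C * (ξs (k + 1)) ^ 2)
    (hbd : ∀ k : ℕ, 1 ≤ k → ξs k ≤ ξ / (k : ℝ) ^ α) :
    ∃ K : ℝ, 0 < K ∧ ∀ k : ℕ, 1 ≤ k → x k ≤ K / (k : ℝ) ^ min 1 α := by
  set β := min 1 α with hβdef
  have hβpos : 0 < β := lt_min one_pos hα
  have hβ1 : β ≤ 1 := min_le_left _ _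
  have hβα : β ≤ α := min_le_right _ _
  -- threshold k₀ ensuring B * ξs k ≤ 1 for k ≥ k₀
  set k₀ : ℕ := max 1 ⌈(B * ξ) ^ α⁻¹⌉₊ with hk₀def
  have hk₀1 : 1 ≤ k₀ := le_max_left _ _
  have hk₀ge : (B * ξ) ^ α⁻¹ ≤ (k₀ : ℝ) := by
    calc (B * ξ) ^ α⁻¹ ≤ (⌈(B * ξ) ^ α⁻¹⌉₊ : ℝ) := Nat.le_ceil _
    _ ≤ (k₀ : ℝ) := by exact_mod_cast le_max_right 1 ⌈(B * ξ) ^ α⁻¹⌉₊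
  have hBξ : ∀ k : ℕ, k₀ ≤ k → B * ξs k ≤ 1 := by
    intro k hk
    have hk1 : 1 ≤ k := le_trans hk₀1 hk
    have hkpos : (0:ℝ) < (k : ℝ) := by exact_mod_cast hk1
    have hkα : B * ξ ≤ (k : ℝ) ^ α := by
      have h1 : ((B * ξ) ^ α⁻¹) ^ α ≤ ((k : ℝ)) ^ α :=
        Real.rpow_le_rpow (by positivity) (hk₀ge.trans (by exact_mod_cast hk)) hα.le
      rwa [Real.rpow_inv_rpow (by positivity) hα.ne'] at h1
    have h2 : B * ξs k ≤ B * (ξ / (k : ℝ) ^ α) :=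
      mul_le_mul_of_nonneg_left (hbd k hk1) hB.le
    have h3 : B * (ξ / (k : ℝ) ^ α) = (B * ξ) / (k : ℝ) ^ α := by ring
    have h4 : (B * ξ) / (k : ℝ) ^ α ≤ 1 := by
      rw [div_le_one (by positivity)]; exact hkα
    linarith
  -- the constant M for the tail
  set M : ℝ := max 1 (max ((2 + B * ξ + C * ξ ^ 2) / A) (x k₀ * (k₀ : ℝ) ^ β)) with hMdef
  have hM1 : 1 ≤ M := le_max_left _ _
  have hM0 : 0 < M := lt_of_lt_of_le one_pos hM1
  have hMsq : 2 * M + B * ξ * M + C * ξ ^ 2 ≤ A * M ^ 2 := by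
    have h1 : (2 + B * ξ + C * ξ ^ 2) / A ≤ M := le_trans (le_max_left _ _) (le_max_right _ _)
    have h2 : 2 + B * ξ + C * ξ ^ 2 ≤ A * M := by
      rw [div_le_iff₀ hA] at h1; linarith [mul_comm M A]
    nlinarith [mul_le_mul_of_nonneg_right h2 hM0.le,
      mul_nonneg (mul_nonneg hC.le (sq_nonneg ξ)) (sub_nonneg.mpr hM1)]
  have hMbase : x k₀ * (k₀ : ℝ) ^ β ≤ M := le_trans (le_max_right _ _) (le_max_right _ _)
  -- key elementary rpow inequality
  have key : ∀ t : ℝ, 1 ≤ t → 1 / t ^ β ≤ 1 / (t + 1) ^ β + 2 / (t + 1) ^ (β + 1) := by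
    intro t ht
    have ht0 : (0:ℝ) < t := lt_of_lt_of_le one_pos ht
    have hs0 : (0:ℝ) < t + 1 := by linarith
    have hs1 : (1:ℝ) ≤ t + 1 := by linarith
    have hq1 : (1:ℝ) ≤ (t + 1) / t := by rw [le_div_iff₀ ht0]; linarith
    have h1 : (t + 1) ^ β ≤ t ^ β * ((t + 1) / t) := by
      have e : (t + 1) ^ β = t ^ β * ((t + 1) / t) ^ β := by
        rw [← Real.mul_rpow ht0.le (by positivity), mul_div_cancel₀ _ ht0.ne']
      rw [e]
      have h2 : ((t + 1) / t) ^ β ≤ ((t + 1) / t) ^ (1:ℝ) :=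
        Real.rpow_le_rpow_of_exponent_le hq1 hβ1
      rw [Real.rpow_one] at h2
      exact mul_le_mul_of_nonneg_left h2 (Real.rpow_nonneg ht0.le _)
    have h3 : 1 / t ^ β ≤ ((t + 1) / t) / (t + 1) ^ β := by
      rw [div_le_div_iff₀ (by positivity) (by positivity), one_mul]
      calc (t + 1) ^ β ≤ t ^ β * ((t + 1) / t) := h1
      _ = (t + 1) / t * t ^ β := by ring
    have h4 : ((t + 1) / t) / (t + 1) ^ β = 1 / (t + 1) ^ β + 1 / (t * (t + 1) ^ β) := by
      have hp : (0:ℝ) < (t + 1) ^ β := Real.rpow_pos_of_pos hs0 _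
      field_simp
    have h5 : 1 / (t * (t + 1) ^ β) ≤ 2 / (t + 1) ^ (β + 1) := by
      rw [Real.rpow_add_one hs0.ne']
      rw [div_le_div_iff₀ (by positivity) (by positivity)]
      have hp : (0:ℝ) ≤ (t + 1) ^ β := Real.rpow_nonneg hs0.le _
      nlinarith
    linarith
  -- main induction: tail bound
  have main : ∀ k : ℕ, k₀ ≤ k → x k ≤ M / (k : ℝ) ^ β := by
    intro k hk
    induction k, hk using Nat.le_induction with
    | base =>
      have hp : (0:ℝ) < (k₀ : ℝ) ^ β := Real.rpow_pos_of_pos (by exact_mod_cast hk₀1) _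
      rw [le_div_iff₀ hp]
      exact hMbase
    | succ k hk ih =>
      have hk1 : 1 ≤ k := le_trans hk₀1 hk
      have ht1 : (1:ℝ) ≤ (k : ℝ) := by exact_mod_cast hk1
      have ht0 : (0:ℝ) < (k : ℝ) := lt_of_lt_of_le one_pos ht1
      set t : ℝ := (k : ℝ) with htdef
      have hs0 : (0:ℝ) < t + 1 := by linarith
      have hs1 : (1:ℝ) ≤ t + 1 := by linarith
      have hcast : ((k + 1 : ℕ) : ℝ) = t + 1 := by push_cast; ring
      set ξ' := ξs (k + 1) with hξ'def
      have hξ'0 : 0 ≤ ξ' := hξs (k + 1) (by omega)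
      have hξ'bd : ξ' ≤ ξ / (t + 1) ^ α := by
        have := hbd (k + 1) (by omega); rwa [hcast] at this
      have hc1 : B * ξ' ≤ 1 := hBξ (k + 1) (by omega)
      have hc0 : 0 ≤ 1 - B * ξ' := by linarith
      set m : ℝ := M / (t + 1) ^ β with hmdef
      have hsβ : (0:ℝ) < (t + 1) ^ β := Real.rpow_pos_of_pos hs0 _
      have hm0 : 0 ≤ m := le_of_lt (div_pos hM0 hsβ)
      -- power comparisons on s := t+1 ≥ 1
      have pow_le : ∀ a b : ℝ, a ≤ b → 1 / (t + 1) ^ b ≤ 1 / (t + 1) ^ a := by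
        intro a b hab
        have := Real.rpow_le_rpow_of_exponent_le hs1 hab
        exact one_div_le_one_div_of_le (Real.rpow_pos_of_pos hs0 a) this
      have hsum : x k + C * ξ' ^ 2 ≤ A * m ^ 2 + (1 - B * ξ') * m := by
        have e2α : (ξ / (t + 1) ^ α) ^ 2 = ξ ^ 2 * (1 / (t + 1) ^ (2 * α)) := by
          rw [div_pow, ← Real.rpow_natCast ((t+1) ^ α) 2, ← Real.rpow_mul hs0.le]
          norm_num
          rw [mul_comm α 2]
          ring
        have eq_m2 : m ^ 2 = M ^ 2 * (1 / (t + 1) ^ (2 * β)) := by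
          rw [hmdef, div_pow, ← Real.rpow_natCast ((t+1) ^ β) 2, ← Real.rpow_mul hs0.le]
          norm_num
          rw [mul_comm β 2]
          ring
        have hξ'sq : ξ' ^ 2 ≤ (ξ / (t + 1) ^ α) ^ 2 := by
          apply pow_le_pow_left₀ hξ'0 hξ'bd
        have step1 : x k + C * ξ' ^ 2 ≤ M / t ^ β + C * ξ ^ 2 * (1 / (t + 1) ^ (2 * α)) := by
          have := mul_le_mul_of_nonneg_left hξ'sq hC.le
          rw [e2α] at this
          have h' : C * (ξ ^ 2 * (1 / (t + 1) ^ (2 * α))) = C * ξ ^ 2 * (1 / (t + 1) ^ (2 * α)) := by ring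
          linarith [ih]
        have step2 : M / t ^ β ≤ M / (t + 1) ^ β + 2 * M * (1 / (t + 1) ^ (β + 1)) := by
          have := key t ht1
          have h' := mul_le_mul_of_nonneg_left this hM0.le
          have e1 : M * (1 / t ^ β) = M / t ^ β := by ring
          have e2 : M * (1 / (t + 1) ^ β + 2 / (t + 1) ^ (β + 1))
              = M / (t + 1) ^ β + 2 * M * (1 / (t + 1) ^ (β + 1)) := by ring
          rw [e1, e2] at h'
          exact h'
        have cmp1 : 1 / (t + 1) ^ (β + 1) ≤ 1 / (t + 1) ^ (2 * β) := pow_le _ _ (by linarith)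
        have cmp2 : 1 / (t + 1) ^ (2 * α) ≤ 1 / (t + 1) ^ (2 * β) := pow_le _ _ (by linarith)
        have cmp3 : 1 / (t + 1) ^ (α + β) ≤ 1 / (t + 1) ^ (2 * β) := pow_le _ _ (by linarith)
        -- bound on the B ξ' m term
        have hBm : B * ξ' * m ≤ B * ξ * M * (1 / (t + 1) ^ (2 * β)) := by
          have h3 : (t + 1) ^ α * (t + 1) ^ β = (t + 1) ^ (α + β) := (Real.rpow_add hs0 _ _).symm
          have hαp : (0:ℝ) < (t + 1) ^ α := Real.rpow_pos_of_pos hs0 _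
          have h2 : B * (ξ / (t + 1) ^ α) * (M / (t + 1) ^ β)
              = B * ξ * M * (1 / (t + 1) ^ (α + β)) := by
            rw [← h3]; field_simp
          have h1 : B * ξ' * m ≤ B * (ξ / (t + 1) ^ α) * (M / (t + 1) ^ β) :=
            mul_le_mul_of_nonneg_right (mul_le_mul_of_nonneg_left hξ'bd hB.le) hm0
          calc B * ξ' * m ≤ B * ξ * M * (1 / (t + 1) ^ (α + β)) := by rw [← h2]; exact h1
          _ ≤ B * ξ * M * (1 / (t + 1) ^ (2 * β)) :=
            mul_le_mul_of_nonneg_left cmp3 (by positivity)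
        -- final assembly
        have hq0 : 0 ≤ 1 / (t + 1) ^ (2 * β) := by positivity
        have final : 2 * M * (1 / (t + 1) ^ (2 * β)) + C * ξ ^ 2 * (1 / (t + 1) ^ (2 * β))
            + B * ξ * M * (1 / (t + 1) ^ (2 * β)) ≤ A * M ^ 2 * (1 / (t + 1) ^ (2 * β)) := by
          have h := mul_le_mul_of_nonneg_right hMsq hq0
          have e1 : (2 * M + B * ξ * M + C * ξ ^ 2) * (1 / (t + 1) ^ (2 * β))
              = 2 * M * (1 / (t + 1) ^ (2 * β)) + C * ξ ^ 2 * (1 / (t + 1) ^ (2 * β))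
                + B * ξ * M * (1 / (t + 1) ^ (2 * β)) := by ring
          have e2 : A * M ^ 2 * (1 / (t + 1) ^ (2 * β))
              = (A * M ^ 2) * (1 / (t + 1) ^ (2 * β)) := by ring
          rw [e1] at h
          linarith
        have expand : A * m ^ 2 + (1 - B * ξ') * m = A * M ^ 2 * (1 / (t + 1) ^ (2 * β)) + m - B * ξ' * m := by
          rw [eq_m2]; ring
        rw [expand]
        have c1 : C * ξ ^ 2 * (1 / (t + 1) ^ (2 * α)) ≤ C * ξ ^ 2 * (1 / (t + 1) ^ (2 * β)) :=
          mul_le_mul_of_nonneg_left cmp2 (by positivity)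
        have c2 : 2 * M * (1 / (t + 1) ^ (β + 1)) ≤ 2 * M * (1 / (t + 1) ^ (2 * β)) :=
          mul_le_mul_of_nonneg_left cmp1 (by positivity)
        have hmm : m = M / (t + 1) ^ β := rfl
        linarith
      -- conclude by contradiction
      by_contra hcon
      push_neg at hcon
      rw [hcast] at hcon
      have hy := hrec k
      have hm2 : m ^ 2 < (x (k + 1)) ^ 2 := by
        have := hcon
        nlinarith
      have hcm : (1 - B * ξ') * m ≤ (1 - B * ξ') * x (k + 1) :=
        mul_le_mul_of_nonneg_left hcon.le hc0
      have hAm : A * m ^ 2 < A * (x (k + 1)) ^ 2 := by nlinarith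
      linarith
  -- assemble the final constant
  set S : ℝ := ∑ j ∈ Finset.range (k₀ + 1), x j * (j : ℝ) ^ β with hSdef
  have hS0 : 0 ≤ S := by
    apply Finset.sum_nonneg
    intro j _
    exact mul_nonneg (hx j) (Real.rpow_nonneg (Nat.cast_nonneg j) _)
  refine ⟨M + S, by linarith, ?_⟩
  intro k hk
  have hkpos : (0:ℝ) < (k : ℝ) := by exact_mod_cast hk
  have hkβ : (0:ℝ) < (k : ℝ) ^ β := Real.rpow_pos_of_pos hkpos _
  rcases le_or_gt k₀ k with h | h
  · have := main k h
    calc x k ≤ M / (k : ℝ) ^ β := this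
    _ ≤ (M + S) / (k : ℝ) ^ β := by gcongr; linarith
  · rw [le_div_iff₀ hkβ]
    have hmem : k ∈ Finset.range (k₀ + 1) := Finset.mem_range.mpr (by omega)
    have h2 : x k * (k : ℝ) ^ β ≤ S := by
      rw [hSdef]
      simpa using Finset.single_le_sum (f := fun j => x j * (j : ℝ) ^ β)
        (fun j _ => mul_nonneg (hx j) (Real.rpow_nonneg (Nat.cast_nonneg j) _)) hmem
    linarith
end

section
/- Fix 0 < δ < 1 and m ≥ 2, and set M = ⌈m log(m/δ)⌉ and T = ⌈e log(m/δ)⌉. Let j_0, …, j_{M-1} be i.i.d. uniform on {1, …, m}. Then with probability at least 1 - 2δ, every element of {1, …, m} appears at least once and at most T times among j_0, …, j_{M-1}. -/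
/-!
A fixed value `a` is missed by all `M` samples with probability `(1 - 1/m)^M ≤ exp (-M/m) ≤ δ/m`.
Its number of hits is a sum of independent indicators, so the Chernoff bound with parameter `1`
gives `P(count ≥ T + 1) ≤ exp (-(T + 1)) (1 + (e - 1)/m)^M ≤ exp ((e - 1) M/m - T - 1) ≤ δ/m`.
A union bound over the `2m` bad events finishes the proof.
-/

open MeasureTheory ProbabilityTheory
open Real Finset

lemma one_sub_inv_pow_le_div {m δ : ℝ} {M : ℕ} (hm : 1 ≤ m) (hδ : 0 < δ)
    (hM : m * log (m / δ) ≤ M) : (1 - 1 / m) ^ M ≤ δ / m := by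
  have hm0 : 0 < m := by linarith
  calc (1 - 1 / m) ^ M ≤ exp (-(1 / m)) ^ M := by
        gcongr ?_ ^ M
        · linarith [div_le_one_of_le₀ hm hm0.le]
        · linarith [add_one_le_exp (-(1 / m))]
    _ = exp (-(M / m)) := by rw [← exp_nat_mul]; ring_nf
    _ ≤ exp (-log (m / δ)) := by
        gcongr
        rwa [le_div_iff₀ hm0, mul_comm]
    _ = δ / m := by rw [exp_neg, exp_log (by positivity), inv_div]

lemma exp_neg_mul_one_add_pow_le_div {m δ t : ℝ} {M : ℕ} (hm : 2 ≤ m) (hδ : 0 < δ)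
    (hM : M ≤ m * log (m / δ) + 1) (ht : exp 1 * log (m / δ) + 1 ≤ t) :
    exp (-1 * t) * (1 + (exp 1 - 1) * (1 / m)) ^ M ≤ δ / m := by
  have hm0 : 0 < m := by linarith
  have he : exp 1 < 2.7182818286 := exp_one_lt_d9
  have he1 : 1 < exp 1 := one_lt_exp_iff.2 one_pos
  -- the overshoot `(e - 1) / m` of `(e - 1) M / m` over `(e - 1) log (m / δ)` is `≤ 1` as `m ≥ 2`
  have hexponent : M * ((exp 1 - 1) / m) - t ≤ -log (m / δ) := by
    have h1 : M * ((exp 1 - 1) / m) ≤ (m * log (m / δ) + 1) * ((exp 1 - 1) / m) := by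
      gcongr
    have h2 : (m * log (m / δ) + 1) * ((exp 1 - 1) / m)
        = (exp 1 - 1) * log (m / δ) + (exp 1 - 1) / m := by field_simp
    have h3 : (exp 1 - 1) / m ≤ 1 := by rw [div_le_one hm0]; linarith
    linarith
  calc exp (-1 * t) * (1 + (exp 1 - 1) * (1 / m)) ^ M
      ≤ exp (-1 * t) * exp ((exp 1 - 1) * (1 / m)) ^ M := by
        gcongr _ * ?_ ^ M
        linarith [add_one_le_exp ((exp 1 - 1) * (1 / m))]
    _ = exp (M * ((exp 1 - 1) / m) - t) := by
        rw [← exp_nat_mul, ← exp_add]; ring_nf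
    _ ≤ exp (-log (m / δ)) := exp_le_exp.2 hexponent
    _ = δ / m := by rw [exp_neg, exp_log (by positivity), inv_div]

lemma exp_mul_indicator_one {Ω : Type*} (s : Set Ω) (t : ℝ) :
    (fun ω => exp (t * s.indicator 1 ω)) = fun ω => s.indicator (fun _ => exp t - 1) ω + 1 := by
  funext ω
  by_cases hω : ω ∈ s <;> simp [hω]

section

variable {Ω : Type*} [MeasurableSpace Ω] {μ : Measure Ω} {s : Set Ω}

lemma ofReal_one_sub_le_of_measureReal_compl_le [IsProbabilityMeasure μ] {ε : ℝ}
    (h : μ.real sᶜ ≤ ε) : ENNReal.ofReal (1 - ε) ≤ μ s := by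
  have hcover : μ.real Set.univ ≤ μ.real s + μ.real sᶜ := by
    rw [← Set.union_compl_self s]; exact measureReal_union_le s sᶜ
  rw [← ofReal_measureReal]
  exact ENNReal.ofReal_le_ofReal (by rw [probReal_univ] at hcover; linarith)

lemma integrable_exp_mul_indicator_one [IsFiniteMeasure μ] (hs : MeasurableSet s) (t : ℝ) :
    Integrable (fun ω => exp (t * s.indicator 1 ω)) μ := by
  rw [exp_mul_indicator_one]
  exact ((integrable_const _).indicator hs).add (integrable_const 1)

lemma mgf_indicator_one [IsProbabilityMeasure μ] (hs : MeasurableSet s) (t : ℝ) :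
    mgf (s.indicator 1) μ t = 1 + (exp t - 1) * μ.real s := by
  rw [mgf, exp_mul_indicator_one,
    integral_add ((integrable_const _).indicator hs) (integrable_const 1),
    integral_indicator_const _ hs, integral_const, probReal_univ, smul_eq_mul, smul_eq_mul]
  ring

end

section Occupancy

variable {Ω ι α : Type*} [MeasurableSpace Ω] {μ : Measure Ω} [IsProbabilityMeasure μ] [Fintype ι]
  [MeasurableSpace α] [MeasurableSingletonClass α] {j : ι → Ω → α}

lemma ProbabilityTheory.iIndepFun.measureReal_forall_ne (hmeas : ∀ l, Measurable (j l))
    (hindep : iIndepFun j μ) (a : α) :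
    μ.real {ω | ∀ l, j l ω ≠ a} = ∏ l, (1 - μ.real {ω | j l ω = a}) := by
  have hinter : {ω | ∀ l, j l ω ≠ a} = ⋂ l, j l ⁻¹' {a}ᶜ := by ext; simp
  rw [hinter, measureReal_def,
    hindep.meas_iInter fun l => ⟨{a}ᶜ, (measurableSet_singleton a).compl, rfl⟩,
    ENNReal.toReal_prod]
  refine prod_congr rfl fun l _ => ?_
  rw [← measureReal_def, Set.preimage_compl,
    probReal_compl_eq_one_sub (hmeas l (measurableSet_singleton a))]
  rfl

lemma ProbabilityTheory.iIndepFun.measureReal_le_card_filter_le [DecidableEq α]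
    (hmeas : ∀ l, Measurable (j l)) (hindep : iIndepFun j μ) (a : α) (t : ℝ) {c : ℝ} (hc : 0 ≤ c) :
    μ.real {ω | t ≤ #{l | j l ω = a}} ≤
      exp (-c * t) * ∏ l, (1 + (exp c - 1) * μ.real {ω | j l ω = a}) := by
  set X : ι → Ω → ℝ := fun l => {ω | j l ω = a}.indicator 1 with hX
  have hXmeas : ∀ l, Measurable (X l) := fun l =>
    measurable_one.indicator (hmeas l (measurableSet_singleton a))
  have hXindep : iIndepFun X μ :=
    hindep.comp (fun _ => ({a} : Set α).indicator 1) fun _ =>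
      measurable_one.indicator (measurableSet_singleton a)
  have hsum : ∀ ω, (#{l | j l ω = a} : ℝ) = (∑ l, X l) ω := fun ω => by
    simp [hX, Set.indicator_apply]
  have hint : Integrable (fun ω => exp (c * (∑ l, X l) ω)) μ :=
    hXindep.integrable_exp_mul_sum hXmeas fun l _ =>
      integrable_exp_mul_indicator_one (hmeas l (measurableSet_singleton a)) c
  calc μ.real {ω | t ≤ #{l | j l ω = a}} = μ.real {ω | t ≤ (∑ l, X l) ω} := by
        simp_rw [hsum]
    _ ≤ exp (-c * t) * mgf (∑ l, X l) μ c := measure_ge_le_exp_mul_mgf t hc hint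
    _ = _ := by
      rw [hXindep.mgf_sum hXmeas]
      congr 1
      exact prod_congr rfl fun l _ => mgf_indicator_one (hmeas l (measurableSet_singleton a)) c

end Occupancy

/-- with `M = ⌈m log(m/δ)⌉` i.i.d. uniform samples from `{1,…,m}` and
`T = ⌈e log(m/δ)⌉`, with probability at least `1 - 2δ` every element of `{1,…,m}` appears
at least once and at most `T` times. -/
theorem stmt12 {Ω : Type*} [MeasurableSpace Ω] (μ : Measure Ω) [IsProbabilityMeasure μ]
    (m : ℕ) (hm : 2 ≤ m) (δ : ℝ) (hδ0 : 0 < δ) (hδ1 : δ < 1)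
    (M T : ℕ)
    (hM : M = ⌈(m : ℝ) * Real.log ((m : ℝ) / δ)⌉₊)
    (hT : T = ⌈Real.exp 1 * Real.log ((m : ℝ) / δ)⌉₊)
    (j : Fin M → Ω → Fin m) (hmeas : ∀ l, Measurable (j l))
    (hindep : iIndepFun j μ)
    (hunif : ∀ l (a : Fin m), μ {ω | j l ω = a} = 1 / m) :
    ENNReal.ofReal (1 - 2 * δ) ≤
      μ {ω | ∀ a : Fin m,
        1 ≤ (Finset.univ.filter fun l => j l ω = a).card ∧
          (Finset.univ.filter fun l => j l ω = a).card ≤ T} := by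
  have hm2 : (2 : ℝ) ≤ m := by exact_mod_cast hm
  have hlog : 0 ≤ log (m / δ) := log_nonneg (by rw [le_div_iff₀ hδ0]; linarith)
  have hp : ∀ l a, μ.real {ω | j l ω = a} = 1 / m := fun l a => by
    simp [measureReal_def, hunif]
  have hmissing : ∀ a, μ.real {ω | ∀ l, j l ω ≠ a} ≤ δ / m := fun a => by
    simp only [hindep.measureReal_forall_ne hmeas, hp, prod_const, card_univ, Fintype.card_fin]
    exact one_sub_inv_pow_le_div (by linarith) hδ0 (hM ▸ Nat.le_ceil _)
  have hoverfull : ∀ a, μ.real {ω | (T + 1 : ℝ) ≤ #{l | j l ω = a}} ≤ δ / m := fun a => by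
    refine (hindep.measureReal_le_card_filter_le hmeas a _ zero_le_one).trans ?_
    simp only [hp, prod_const, card_univ, Fintype.card_fin]
    exact exp_neg_mul_one_add_pow_le_div hm2 hδ0
      (hM ▸ (Nat.ceil_lt_add_one (by positivity)).le) (by linarith [hT ▸ Nat.le_ceil _])
  have hbad : μ.real {ω | ∀ a : Fin m, 1 ≤ #{l | j l ω = a} ∧ #{l | j l ω = a} ≤ T}ᶜ ≤ 2 * δ :=
    calc _ ≤ μ.real (⋃ a, {ω | ∀ l, j l ω ≠ a} ∪ {ω | (T + 1 : ℝ) ≤ #{l | j l ω = a}}) := by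
          refine measureReal_mono fun ω hω => ?_
          simp only [Set.mem_compl_iff, Set.mem_ofPred_eq, not_forall, not_and_or, not_le,
            Nat.lt_one_iff, card_eq_zero, filter_eq_empty_iff] at hω
          obtain ⟨a, hmiss | hover⟩ := hω
          · exact Set.mem_iUnion.2 ⟨a, Or.inl fun l => hmiss (mem_univ l)⟩
          · exact Set.mem_iUnion.2 ⟨a, Or.inr (by exact_mod_cast hover)⟩
      _ ≤ ∑ a, (μ.real {ω | ∀ l, j l ω ≠ a} + μ.real {ω | (T + 1 : ℝ) ≤ #{l | j l ω = a}}) :=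
          (measureReal_iUnion_fintype_le _).trans (sum_le_sum fun a _ => measureReal_union_le _ _)
      _ ≤ ∑ _a : Fin m, 2 * (δ / m) :=
          sum_le_sum fun a _ => by linarith [hmissing a, hoverfull a]
      _ = 2 * δ := by
          rw [sum_const, card_univ, Fintype.card_fin, nsmul_eq_mul]
          field_simp
  exact ofReal_one_sub_le_of_measureReal_compl_le hbad
end

section
/- Let V: ℝ^m → ℝ be convex and differentiable, τ > 0, and define one step of parallel proximal coordinate descent: for each j, x_j^{+} = argmin_{x_j} { V(x_j, x_{-j}) + (x_j - x_j)²/(2τ) } evaluated at the current point x^k. Suppose the off-block Lipschitz condition |∂_j V(x_j, x_{-j}) - ∂_j V(x_j, x'_{-j})| ≤ L‖x_{-j} - x'_{-j}‖ holds. If 0 < τ < (m - 1/2)/(L(m-1)^{3/2}), then V(x^k) - V(x^{k+1}) ≥ (1/m)[1/(2τ) + (m-1)(1/τ - L√(m-1))]·‖x^{k+1} - x^k‖². -/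
/-- The `j`-th partial derivative of `V : ℝ^m → ℝ`. -/
noncomputable def pderiv' {m : ℕ} (V : (Fin m → ℝ) → ℝ) (j : Fin m) (x : Fin m → ℝ) : ℝ :=
  fderiv ℝ V x (Pi.single j 1)

lemma lin_apply {m : ℕ} (f : (Fin m → ℝ) →L[ℝ] ℝ) (v : Fin m → ℝ) :
    f v = ∑ i, v i * f (Pi.single i 1) := by
  have hv : v = ∑ i, v i • (Pi.single i 1 : Fin m → ℝ) := by
    have : ∀ i, v i • (Pi.single i 1 : Fin m → ℝ) = Pi.single i (v i) := by
      intro i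
      rw [← Pi.single_smul, smul_eq_mul, mul_one]
    simp_rw [this]
    exact (Finset.univ_sum_single v).symm
  conv_lhs => rw [hv]
  rw [map_sum]
  simp [smul_eq_mul]

lemma grad_ineq {m : ℕ} {V : (Fin m → ℝ) → ℝ} (hconv : ConvexOn ℝ Set.univ V)
    (hdiff : Differentiable ℝ V) (a b : Fin m → ℝ) :
    V a + fderiv ℝ V a (b - a) ≤ V b := by
  set v := b - a with hv
  have hc : ∀ s : ℝ, HasDerivAt (fun s : ℝ => a + s • v) v s := by
    intro s
    simpa using ((hasDerivAt_id s).smul_const v).const_add a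
  have hh : ∀ s : ℝ, HasDerivAt (fun s : ℝ => V (a + s • v)) (fderiv ℝ V (a + s • v) v) s :=
    fun s => (hdiff _).hasFDerivAt.comp_hasDerivAt s (hc s)
  have hconv1 : ConvexOn ℝ Set.univ (fun s : ℝ => V (a + s • v)) := by
    refine ⟨convex_univ, fun p _ q _ c e hc0 he0 hce => ?_⟩
    have key : a + (c * p + e * q) • v = c • (a + p • v) + e • (a + q • v) := by
      have h1 : c • (a + p • v) + e • (a + q • v) = (c + e) • a + (c * p + e * q) • v := by
        rw [smul_add, smul_add, add_smul, add_smul, smul_smul, smul_smul]; abel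
      rw [h1, hce, one_smul]
    simp only [smul_eq_mul, key]
    exact hconv.2 (Set.mem_univ _) (Set.mem_univ _) hc0 he0 hce
  have hs := hconv1.le_slope_of_hasDerivAt (Set.mem_univ (0:ℝ)) (Set.mem_univ (1:ℝ))
    one_pos (hh 0)
  rw [slope_def_field] at hs
  simp only [zero_smul, add_zero, one_smul] at hs
  have hb : a + v = b := by simp [hv]
  rw [hb] at hs
  have : fderiv ℝ V a v ≤ V b - V a := by
    simpa using hs
  linarith

/-- Euclidean sufficient decrease for the parallel proximal coordinate step:
if `V` is convex differentiable with off-block Lipschitz partial derivatives with constant `L`,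
`0 < τ < (m - 1/2)/(L (m-1)^{3/2})`, and `y` is obtained from `x` by solving all `m`
one-dimensional proximal subproblems in parallel, then
`V(x) - V(y) ≥ (1/m)[1/(2τ) + (m-1)(1/τ - L√(m-1))] ‖y - x‖²`. -/
theorem stmt16 {m : ℕ} (V : (Fin m → ℝ) → ℝ)
    (hconv : ConvexOn ℝ Set.univ V) (hdiff : Differentiable ℝ V)
    (L : ℝ) (hL : 0 < L)
    (hlip : ∀ j (x x' : Fin m → ℝ), x j = x' j →
      |pderiv' V j x - pderiv' V j x'| ≤ L * Real.sqrt (∑ i, (x i - x' i) ^ 2))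
    (τ : ℝ) (hτ0 : 0 < τ)
    (hτ1 : τ < ((m : ℝ) - 1 / 2) / (L * ((m : ℝ) - 1) ^ ((3 : ℝ) / 2)))
    (x y : Fin m → ℝ)
    (hupd : ∀ j, ∀ t : ℝ,
      V (Function.update x j (y j)) + (y j - x j) ^ 2 / (2 * τ)
        ≤ V (Function.update x j t) + (t - x j) ^ 2 / (2 * τ)) :
    V x - V y ≥
      1 / (m : ℝ) * (1 / (2 * τ) + ((m : ℝ) - 1) * (1 / τ - L * Real.sqrt ((m : ℝ) - 1))) *
        ∑ j, (y j - x j) ^ 2 := by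
  rcases Nat.eq_zero_or_pos m with hm0 | hmpos
  · subst hm0
    have hxy : x = y := Subsingleton.elim x y
    simp [hxy]
  have hmR : (0:ℝ) < (m:ℝ) := by exact_mod_cast hmpos
  have hm1' : (0:ℝ) ≤ (m:ℝ) - 1 := by
    have : (1:ℝ) ≤ (m:ℝ) := by exact_mod_cast hmpos
    linarith
  set u : Fin m → Fin m → ℝ := fun j => Function.update x j (y j) with hu
  set S : ℝ := ∑ j, (y j - x j) ^ 2 with hS
  set R : ℝ := L * Real.sqrt ((m:ℝ) - 1) with hR
  have hS0 : (0:ℝ) ≤ S := Finset.sum_nonneg fun _ _ => sq_nonneg _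
  -- first-order optimality condition
  have foc : ∀ j, pderiv' V j (u j) = -((1/τ) * (y j - x j)) := by
    intro j
    have heq : (fun t : ℝ => Function.update x j t) =
        fun t => x + (t - x j) • (Pi.single j 1 : Fin m → ℝ) := by
      funext t i
      rcases eq_or_ne i j with rfl | h
      · simp
      · simp [Function.update_of_ne h, Pi.single_eq_of_ne h]
    have hc : HasDerivAt (fun t : ℝ => Function.update x j t)
        ((Pi.single j 1 : Fin m → ℝ)) (y j) := by
      rw [heq]
      simpa using (((hasDerivAt_id (y j)).sub_const (x j)).smul_const
        (Pi.single j 1 : Fin m → ℝ)).const_add x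
    have hd1 : HasDerivAt (fun t : ℝ => V (Function.update x j t))
        (pderiv' V j (u j)) (y j) :=
      (hdiff _).hasFDerivAt.comp_hasDerivAt (y j) hc
    have hd2 : HasDerivAt (fun t : ℝ => (t - x j) ^ 2 / (2 * τ))
        ((2 * (y j - x j) ^ 1 * 1) / (2 * τ)) (y j) :=
      (((hasDerivAt_id (y j)).sub_const (x j)).pow 2).div_const (2 * τ)
    have hmin : IsLocalMin (fun t : ℝ => V (Function.update x j t) + (t - x j) ^ 2 / (2 * τ))
        (y j) := Filter.Eventually.of_forall fun t => hupd j t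
    have hz := hmin.hasDerivAt_eq_zero (hd1.add hd2)
    have hτ' : τ ≠ 0 := ne_of_gt hτ0
    field_simp at hz ⊢
    linarith
  -- step 1: per-coordinate decrease
  have h1 : ∀ j, V (u j) + (1/τ) * (y j - x j) ^ 2 ≤ V x := by
    intro j
    have hg := grad_ineq hconv hdiff (u j) x
    have hxu : x - u j = (-(y j - x j)) • (Pi.single j 1 : Fin m → ℝ) := by
      funext i
      rcases eq_or_ne i j with rfl | h
      · simp [hu]
      · simp [hu, Function.update_of_ne h, Pi.single_eq_of_ne h]
    rw [hxu] at hg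
    rw [ContinuousLinearMap.map_smul] at hg
    have : fderiv ℝ V (u j) (Pi.single j 1) = pderiv' V j (u j) := rfl
    rw [smul_eq_mul, this, foc j] at hg
    have hval : -(y j - x j) * -(1 / τ * (y j - x j)) = (1/τ) * (y j - x j)^2 := by ring
    linarith [hg, hval.symm.le]
  -- notation for the gradient at y
  set p : Fin m → ℝ := fun i => pderiv' V i y with hp
  set D : ℝ := ∑ i, (y i - x i) * p i with hD
  -- step 2: convexity at y towards each u j
  have h2 : ∀ j, V y + ((y j - x j) * p j - D) ≤ V (u j) := by
    intro j
    have hg := grad_ineq hconv hdiff y (u j)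
    rw [lin_apply] at hg
    have hsum : ∑ i, (u j - y) i * fderiv ℝ V y (Pi.single i 1)
        = (y j - x j) * p j - D := by
      have hterm : ∀ i, (u j - y) i * fderiv ℝ V y (Pi.single i 1)
          = (if i = j then (y j - x j) * p i else 0) - (y i - x i) * p i := by
        intro i
        rcases eq_or_ne i j with rfl | h
        · simp [hu, hp, pderiv']
        · simp [hu, h, Function.update_of_ne h, hp, pderiv']
          ring
      rw [Finset.sum_congr rfl fun i _ => hterm i, Finset.sum_sub_distrib,
        Finset.sum_ite_eq' Finset.univ j (fun i => (y j - x j) * p i)]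
      simp [hD]
    rw [hsum] at hg
    exact hg
  -- Lipschitz bound on the gradient error
  have herr : ∀ j, |p j + (1/τ) * (y j - x j)| ≤ L * Real.sqrt (S - (y j - x j)^2) := by
    intro j
    have hyu : y j = u j j := by simp [hu]
    have hl := hlip j y (u j) hyu
    have heval : ∑ i, (y i - u j i) ^ 2 = S - (y j - x j) ^ 2 := by
      have hterm : ∀ i, (y i - u j i) ^ 2
          = (y i - x i) ^ 2 - (if i = j then (y j - x j) ^ 2 else 0) := by
        intro i
        rcases eq_or_ne i j with rfl | h
        · simp [hu]
        · simp [hu, h, Function.update_of_ne h]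
      rw [Finset.sum_congr rfl fun i _ => hterm i, Finset.sum_sub_distrib,
        Finset.sum_ite_eq' Finset.univ j (fun _ => (y j - x j) ^ 2)]
      simp [hS]
    rw [heval] at hl
    have hrw : pderiv' V j y - pderiv' V j (u j) = p j + (1/τ) * (y j - x j) := by
      have hpj : p j = pderiv' V j y := by rw [hp]
      rw [← hpj, foc j]; ring
    rw [hrw] at hl
    exact hl
  -- bound on D
  have hDle : D ≤ R * S - (1/τ) * S := by
    have hsplit : D = (∑ j, (y j - x j) * (p j + (1/τ) * (y j - x j))) - (1/τ) * S := by
      rw [hD, hS, Finset.mul_sum, ← Finset.sum_sub_distrib]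
      congr 1; funext j; ring
    have hterm : ∀ j, (y j - x j) * (p j + (1/τ) * (y j - x j))
        ≤ |y j - x j| * (L * Real.sqrt (S - (y j - x j)^2)) := by
      intro j
      calc (y j - x j) * (p j + (1/τ) * (y j - x j))
          ≤ |(y j - x j) * (p j + (1/τ) * (y j - x j))| := le_abs_self _
        _ = |y j - x j| * |p j + (1/τ) * (y j - x j)| := abs_mul _ _
        _ ≤ |y j - x j| * (L * Real.sqrt (S - (y j - x j)^2)) :=
            mul_le_mul_of_nonneg_left (herr j) (abs_nonneg _)
    have hsum1 : ∑ j, (y j - x j) * (p j + (1/τ) * (y j - x j))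
        ≤ L * ∑ j, |y j - x j| * Real.sqrt (S - (y j - x j)^2) := by
      rw [Finset.mul_sum]
      refine Finset.sum_le_sum fun j _ => (hterm j).trans_eq (by ring)
    have hCS : ∑ j, |y j - x j| * Real.sqrt (S - (y j - x j)^2)
        ≤ Real.sqrt (∑ j, |y j - x j| ^ 2) *
          Real.sqrt (∑ j, (Real.sqrt (S - (y j - x j)^2)) ^ 2) :=
      Real.sum_mul_le_sqrt_mul_sqrt _ _ _
    have hdjS : ∀ j : Fin m, (y j - x j) ^ 2 ≤ S :=
      fun j => Finset.single_le_sum (fun i _ => sq_nonneg (y i - x i)) (Finset.mem_univ j)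
    have he1 : ∑ j, |y j - x j| ^ 2 = S := by
      rw [hS]; exact Finset.sum_congr rfl fun j _ => sq_abs _
    have he2 : ∑ j, (Real.sqrt (S - (y j - x j)^2)) ^ 2 = ((m:ℝ) - 1) * S := by
      have : ∀ j : Fin m, (Real.sqrt (S - (y j - x j)^2)) ^ 2 = S - (y j - x j)^2 :=
        fun j => Real.sq_sqrt (sub_nonneg.2 (hdjS j))
      rw [Finset.sum_congr rfl fun j _ => this j, Finset.sum_sub_distrib]
      simp [hS, Finset.card_univ]
      ring
    have hfin : Real.sqrt S * Real.sqrt (((m:ℝ) - 1) * S) = Real.sqrt ((m:ℝ) - 1) * S := by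
      rw [Real.sqrt_mul hm1', mul_comm (Real.sqrt ((m:ℝ)-1)), ← mul_assoc,
        Real.mul_self_sqrt hS0]
      ring
    rw [he1, he2, hfin] at hCS
    have : ∑ j, (y j - x j) * (p j + (1/τ) * (y j - x j)) ≤ L * (Real.sqrt ((m:ℝ)-1) * S) :=
      hsum1.trans (mul_le_mul_of_nonneg_left hCS hL.le)
    rw [hsplit, hR]
    linarith [this]
  -- sum the inequalities
  have hsum1 : ∑ j, V (u j) + (1/τ) * S ≤ (m:ℝ) * V x := by
    have := Finset.sum_le_sum fun j (_ : j ∈ Finset.univ) => h1 j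
    rw [Finset.sum_add_distrib, Finset.sum_const, Finset.card_univ] at this
    simp only [Fintype.card_fin, nsmul_eq_mul] at this
    rw [hS, Finset.mul_sum]
    linarith [this]
  have hsum2 : (m:ℝ) * V y - ((m:ℝ) - 1) * D ≤ ∑ j, V (u j) := by
    have := Finset.sum_le_sum fun j (_ : j ∈ Finset.univ) => h2 j
    rw [Finset.sum_add_distrib, Finset.sum_const, Finset.card_univ,
      Finset.sum_sub_distrib, Finset.sum_const, Finset.card_univ] at this
    simp only [Fintype.card_fin, nsmul_eq_mul] at this
    rw [← hD] at this
    -- this : m * V y + (D - m * D) ≤ ∑ j, V (u j)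
    have hid : (m:ℝ) * V y + (D - (m:ℝ) * D) = (m:ℝ) * V y - ((m:ℝ) - 1) * D := by ring
    linarith [this]
  have hP : ((m:ℝ) - 1) * D ≤ ((m:ℝ) - 1) * (R * S - (1/τ) * S) :=
    mul_le_mul_of_nonneg_left hDle hm1'
  have hMain : (1/τ) * S + ((m:ℝ) - 1) * (1/τ - R) * S ≤ (m:ℝ) * (V x - V y) := by
    nlinarith [hsum1, hsum2, hP]
  have hhalf : 1/(2*τ) * S ≤ 1/τ * S := by
    refine mul_le_mul_of_nonneg_right ?_ hS0
    rw [div_le_div_iff₀ (by positivity) hτ0]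
    linarith
  rw [ge_iff_le, mul_assoc, one_div, inv_mul_le_iff₀ hmR]
  nlinarith [hMain, hhalf]
end

section
/- Let V: ℝ^m → ℝ be differentiable with the off-block Lipschitz property |∂_j V(x_j, x_{-j}) - ∂_j V(x_j, x'_{-j})| ≤ L‖x_{-j} - x'_{-j}‖ for all j, and let x^{k+1} be one parallel proximal coordinate step from x^k with step size τ > 0, i.e. x_j^{k+1} = x_j^k - τ ∂_j V(x_j^{k+1}, x_{-j}^k) for each j. Then ∑_{j=1}^m |∂_j V(x^{k+1})|² ≤ (2L²(m-1) + 2/τ²)·‖x^{k+1} - x^k‖². -/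
/-- Euclidean relative error bound for the parallel proximal coordinate step:
if `V` has off-block Lipschitz partial derivatives with constant `L` and `y` satisfies the
first-order optimality conditions `y_j = x_j - τ ∂_j V(y_j, x_{-j})` of the parallel proximal
step from `x`, then `∑_j |∂_j V(y)|² ≤ (2L²(m-1) + 2/τ²) ‖y - x‖²`. -/
theorem stmt17 {m : ℕ} (V : (Fin m → ℝ) → ℝ) (hdiff : Differentiable ℝ V)
    (L : ℝ) (hL : 0 < L)
    (hlip : ∀ j (x x' : Fin m → ℝ), x j = x' j →
      |pderiv' V j x - pderiv' V j x'| ≤ L * Real.sqrt (∑ i, (x i - x' i) ^ 2))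
    (τ : ℝ) (hτ : 0 < τ)
    (x y : Fin m → ℝ)
    (hfoc : ∀ j, y j = x j - τ * pderiv' V j (Function.update x j (y j))) :
    ∑ j, (pderiv' V j y) ^ 2 ≤
      (2 * L ^ 2 * ((m : ℝ) - 1) + 2 / τ ^ 2) * ∑ j, (y j - x j) ^ 2 := by
  set S := ∑ i, (y i - x i) ^ 2 with hS
  have hcle : ∀ j, (y j - x j) ^ 2 ≤ S := by
    intro j
    exact Finset.single_le_sum (f := fun i => (y i - x i) ^ 2) (fun i _ => sq_nonneg _) (Finset.mem_univ j)
  have key : ∀ j, (pderiv' V j y) ^ 2 ≤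
      2 * L ^ 2 * (S - (y j - x j) ^ 2) + 2 / τ ^ 2 * (y j - x j) ^ 2 := by
    intro j
    set b := pderiv' V j (Function.update x j (y j)) with hb
    have hbval : τ * b = x j - y j := by linarith [hfoc j]
    set a := pderiv' V j y - b with ha
    have hT : ∑ i, (y i - Function.update x j (y j) i) ^ 2 = S - (y j - x j) ^ 2 := by
      have : ∀ i : Fin m, (y i - Function.update x j (y j) i) ^ 2 =
          (y i - x i) ^ 2 - (if i = j then (y j - x j) ^ 2 else 0) := by
        intro i
        by_cases h : i = j
        · subst h; simp [Function.update_self]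
        · simp [Function.update_of_ne h, h]
      rw [Finset.sum_congr rfl fun i _ => this i, Finset.sum_sub_distrib,
        Finset.sum_ite_eq' Finset.univ j (fun _ => (y j - x j) ^ 2)]
      simp [hS]
    have h1 := hlip j y (Function.update x j (y j)) (by simp)
    rw [hT] at h1
    have hTnn : (0:ℝ) ≤ S - (y j - x j) ^ 2 := by linarith [hcle j]
    have hasq : a ^ 2 ≤ L ^ 2 * (S - (y j - x j) ^ 2) := by
      have h2 : a ^ 2 ≤ (L * Real.sqrt (S - (y j - x j) ^ 2)) ^ 2 := by
        rw [← sq_abs a]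
        exact pow_le_pow_left₀ (abs_nonneg _) h1 2
      calc a ^ 2 ≤ (L * Real.sqrt (S - (y j - x j) ^ 2)) ^ 2 := h2
        _ = L ^ 2 * (S - (y j - x j) ^ 2) := by
            rw [mul_pow, Real.sq_sqrt hTnn]
    have hbsq : b ^ 2 = (y j - x j) ^ 2 / τ ^ 2 := by
      have hτ2 : τ ^ 2 ≠ 0 := pow_ne_zero 2 hτ.ne'
      have h4 : (τ * b) ^ 2 = (x j - y j) ^ 2 := by rw [hbval]
      rw [eq_div_iff hτ2]
      linear_combination h4
    clear_value S
    have hab : pderiv' V j y = a + b := by rw [ha]; ring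
    clear_value a b
    rw [hab]
    have h3 : (a + b) ^ 2 ≤ 2 * a ^ 2 + 2 * b ^ 2 := by nlinarith [sq_nonneg (a - b)]
    have hτ2 : (0:ℝ) < τ ^ 2 := by positivity
    calc (a + b) ^ 2 ≤ 2 * a ^ 2 + 2 * b ^ 2 := h3
      _ ≤ 2 * (L ^ 2 * (S - (y j - x j) ^ 2)) + 2 * ((y j - x j) ^ 2 / τ ^ 2) := by
          rw [hbsq]; nlinarith [hasq]
      _ = 2 * L ^ 2 * (S - (y j - x j) ^ 2) + 2 / τ ^ 2 * (y j - x j) ^ 2 := by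
          field_simp
  calc ∑ j, (pderiv' V j y) ^ 2
      ≤ ∑ j, (2 * L ^ 2 * (S - (y j - x j) ^ 2) + 2 / τ ^ 2 * (y j - x j) ^ 2) :=
        Finset.sum_le_sum fun j _ => key j
    _ = (2 * L ^ 2 * ((m : ℝ) - 1) + 2 / τ ^ 2) * S := by
        rw [Finset.sum_add_distrib, ← Finset.mul_sum, ← Finset.mul_sum,
          Finset.sum_sub_distrib, Finset.sum_const, Finset.card_univ, Fintype.card_fin,
          ← hS]
        push_cast
        ring
    _ = (2 * L ^ 2 * ((m : ℝ) - 1) + 2 / τ ^ 2) * ∑ j, (y j - x j) ^ 2 := by rw [hS]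
end

section
/- Let x^{k+1} be the solution of the inexact parallel proximal step, meaning x_j^{k+1} = x_j^k - τ ∂_j V(x_j^{k+1}, x_{-j}^k) + η_j^{k+1} with |η_j^{k+1}| ≤ ε_j^{k+1} for each j. Assume the off-block Lipschitz condition with constant L. Then ∑_{j=1}^m |∂_j V(x^{k+1})|² ≤ (3L²(m-1) + 3/τ²)‖x^{k+1} - x^k‖² + (3/τ²)∑_{j=1}^m (ε_j^{k+1})². -/
/-- Euclidean relative error bound for the inexact parallel proximal step:
if `V` has off-block Lipschitz partial derivatives with constant `L` and `y` satisfies the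
inexact first-order conditions `y_j = x_j - τ ∂_j V(y_j, x_{-j}) + η_j` with `|η_j| ≤ ε_j`,
then `∑_j |∂_j V(y)|² ≤ (3L²(m-1) + 3/τ²) ‖y - x‖² + (3/τ²) ∑_j ε_j²`. -/
theorem stmt18 {m : ℕ} (V : (Fin m → ℝ) → ℝ) (hdiff : Differentiable ℝ V)
    (L : ℝ) (hL : 0 < L)
    (hlip : ∀ j (x x' : Fin m → ℝ), x j = x' j →
      |pderiv' V j x - pderiv' V j x'| ≤ L * Real.sqrt (∑ i, (x i - x' i) ^ 2))
    (τ : ℝ) (hτ : 0 < τ)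
    (x y : Fin m → ℝ) (η ε : Fin m → ℝ)
    (hfoc : ∀ j, y j = x j - τ * pderiv' V j (Function.update x j (y j)) + η j)
    (herr : ∀ j, |η j| ≤ ε j) :
    ∑ j, (pderiv' V j y) ^ 2 ≤
      (3 * L ^ 2 * ((m : ℝ) - 1) + 3 / τ ^ 2) * (∑ j, (y j - x j) ^ 2) +
        3 / τ ^ 2 * ∑ j, (ε j) ^ 2 := by
  set S := ∑ i, (y i - x i) ^ 2 with hS
  have key : ∀ j, (pderiv' V j y) ^ 2 ≤
      3 * L ^ 2 * (S - (y j - x j) ^ 2) + 3 / τ ^ 2 * (y j - x j) ^ 2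
        + 3 / τ ^ 2 * (ε j) ^ 2 := by
    intro j
    set u := Function.update x j (y j) with hu
    have hsum : ∑ i, (y i - u i) ^ 2 = S - (y j - x j) ^ 2 := by
      have h1 : ∀ i, (y i - u i) ^ 2
          = (y i - x i) ^ 2 - (if i = j then (y j - x j) ^ 2 else 0) := by
        intro i
        by_cases h : i = j
        · subst h; simp [hu]
        · simp [hu, Function.update_of_ne h, h]
      simp [h1, Finset.sum_sub_distrib, hS]
    have hnn : 0 ≤ S - (y j - x j) ^ 2 := by
      rw [← hsum]; exact Finset.sum_nonneg fun i _ => sq_nonneg _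
    have ha : |pderiv' V j y - pderiv' V j u| ≤ L * Real.sqrt (S - (y j - x j) ^ 2) := by
      have := hlip j y u (by simp [hu])
      rwa [hsum] at this
    have ha2 : (pderiv' V j y - pderiv' V j u) ^ 2 ≤ L ^ 2 * (S - (y j - x j) ^ 2) := by
      calc (pderiv' V j y - pderiv' V j u) ^ 2 = |pderiv' V j y - pderiv' V j u| ^ 2 :=
            (sq_abs _).symm
        _ ≤ (L * Real.sqrt (S - (y j - x j) ^ 2)) ^ 2 := by
            exact pow_le_pow_left₀ (abs_nonneg _) ha 2
        _ = L ^ 2 * (S - (y j - x j) ^ 2) := by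
            rw [mul_pow, Real.sq_sqrt hnn]
    have hp : pderiv' V j u = (x j - y j + η j) / τ := by
      have := hfoc j
      field_simp
      linarith
    have hε : (η j) ^ 2 ≤ (ε j) ^ 2 := by
      calc (η j) ^ 2 = |η j| ^ 2 := (sq_abs _).symm
        _ ≤ (ε j) ^ 2 := pow_le_pow_left₀ (abs_nonneg _) (herr j) 2
    have h3 : pderiv' V j y
        = (pderiv' V j y - pderiv' V j u) + ((x j - y j) / τ + η j / τ) := by
      rw [hp]; ring
    have hτ2 : (0:ℝ) < τ ^ 2 := by positivity
    have h4 : (pderiv' V j y) ^ 2 ≤ 3 * (pderiv' V j y - pderiv' V j u) ^ 2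
        + 3 * ((x j - y j) / τ) ^ 2 + 3 * (η j / τ) ^ 2 := by
      set a := pderiv' V j y - pderiv' V j u with hadef
      rw [h3]
      nlinarith [sq_nonneg (a - (x j - y j) / τ), sq_nonneg (a - η j / τ),
        sq_nonneg ((x j - y j) / τ - η j / τ)]
    have hb : ((x j - y j) / τ) ^ 2 = (y j - x j) ^ 2 / τ ^ 2 := by
      rw [div_pow]; ring_nf
    have hc : (η j / τ) ^ 2 ≤ (ε j) ^ 2 / τ ^ 2 := by
      rw [div_pow]
      gcongr
    calc (pderiv' V j y) ^ 2 ≤ 3 * (pderiv' V j y - pderiv' V j u) ^ 2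
          + 3 * ((x j - y j) / τ) ^ 2 + 3 * (η j / τ) ^ 2 := h4
      _ ≤ 3 * (L ^ 2 * (S - (y j - x j) ^ 2)) + 3 * ((y j - x j) ^ 2 / τ ^ 2)
          + 3 * ((ε j) ^ 2 / τ ^ 2) := by
          rw [hb]
          gcongr
      _ = 3 * L ^ 2 * (S - (y j - x j) ^ 2) + 3 / τ ^ 2 * (y j - x j) ^ 2
          + 3 / τ ^ 2 * (ε j) ^ 2 := by ring
  calc ∑ j, (pderiv' V j y) ^ 2
      ≤ ∑ j, (3 * L ^ 2 * (S - (y j - x j) ^ 2) + 3 / τ ^ 2 * (y j - x j) ^ 2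
          + 3 / τ ^ 2 * (ε j) ^ 2) := Finset.sum_le_sum fun j _ => key j
    _ = 3 * L ^ 2 * ((m : ℝ) * S - S) + 3 / τ ^ 2 * S + 3 / τ ^ 2 * ∑ j, (ε j) ^ 2 := by
        have e1 : ∑ j : Fin m, (S - (y j - x j) ^ 2) = (m : ℝ) * S - S := by
          rw [Finset.sum_sub_distrib, Finset.sum_const, Finset.card_univ, Fintype.card_fin,
            nsmul_eq_mul, ← hS]
        rw [Finset.sum_add_distrib, Finset.sum_add_distrib, ← Finset.mul_sum, ← Finset.mul_sum,
          ← Finset.mul_sum, e1, ← hS]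
    _ = (3 * L ^ 2 * ((m : ℝ) - 1) + 3 / τ ^ 2) * S + 3 / τ ^ 2 * ∑ j, (ε j) ^ 2 := by ring
end

section
/- Let Q₁, Q₂, Q₃ ∈ ℝ, r₁, r₂, r₃ > 0, and define Ṽ(x₁, x₂, x₃) = ∑_{i=1}^3 ((r_i/2)‖x_i - m_i‖² - Q_i²‖x_i‖²) - ∑_{1≤i<j≤3} (Q_iQ_j/2) arctan‖x_i - x_j‖² on (ℝ²)³, where m_i ∈ ℝ² are fixed centers. If λ := min_{1≤i≤3}( r_i - 4Q_i² - |Q_i| ∑_{j≠i} |Q_j| ) > 0, then Ṽ is λ-strongly convex, i.e., its Hessian satisfies y^T ∇²Ṽ(x) y ≥ λ‖y‖² for all x, y ∈ (ℝ²)³. -/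
/-!
The quadratic part of the potential has Hessian `(rᵢ - 2 Qᵢ²) Id` in each block. The Hessian of
`w ↦ arctan ‖w‖²` has operator norm at most `2`, so the pair term of `i < j` lowers the quadratic
form by at most `|Qᵢ Qⱼ| ‖yᵢ - yⱼ‖² ≤ |Qᵢ Qⱼ| (‖yᵢ‖ + ‖yⱼ‖)²`. Bounding the cross term by
`2 |Qᵢ Qⱼ| ‖yᵢ‖ ‖yⱼ‖ ≤ Qᵢ² ‖yᵢ‖² + Qⱼ² ‖yⱼ‖²` and collecting, particle `i` loses
`|Qᵢ| ∑_{j ≠ i} |Qⱼ| + (n - 1) Qᵢ²`, which for `n = 3` gives the coefficient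
`rᵢ - 4 Qᵢ² - |Qᵢ| ∑_{j ≠ i} |Qⱼ|`.
-/

open Finset Real

section SecondDerivative

variable {F G : Type*} [NormedAddCommGroup F] [NormedSpace ℝ F]
  [NormedAddCommGroup G] [NormedSpace ℝ G] {f g : F → ℝ} (x y : F)

theorem fderiv_fderiv_apply_eq_iteratedFDeriv (f : F → ℝ) :
    fderiv ℝ (fderiv ℝ f) x y y = iteratedFDeriv ℝ 2 f x ![y, y] :=
  (iteratedFDeriv_two_apply f x ![y, y]).symm

theorem fderiv_fderiv_fun_sub_apply (hf : ContDiff ℝ 2 f) (hg : ContDiff ℝ 2 g) :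
    fderiv ℝ (fderiv ℝ fun x => f x - g x) x y y =
      fderiv ℝ (fderiv ℝ f) x y y - fderiv ℝ (fderiv ℝ g) x y y := by
  simp only [fderiv_fderiv_apply_eq_iteratedFDeriv,
    fun_iteratedFDeriv_sub_apply hf.contDiffAt hg.contDiffAt]
  rfl

theorem fderiv_fderiv_const_mul_apply (a : ℝ) (hf : ContDiff ℝ 2 f) :
    fderiv ℝ (fderiv ℝ fun x => a * f x) x y y = a * fderiv ℝ (fderiv ℝ f) x y y := by
  simp only [fderiv_fderiv_apply_eq_iteratedFDeriv, ← smul_eq_mul,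
    iteratedFDeriv_const_smul_apply' hf.contDiffAt]
  rfl

theorem fderiv_fderiv_fun_sum_apply {ι : Type*} {s : Finset ι} {f : ι → F → ℝ}
    (hf : ∀ i ∈ s, ContDiff ℝ 2 (f i)) :
    fderiv ℝ (fderiv ℝ fun x => ∑ i ∈ s, f i x) x y y =
      ∑ i ∈ s, fderiv ℝ (fderiv ℝ (f i)) x y y := by
  simp only [fderiv_fderiv_apply_eq_iteratedFDeriv,
    iteratedFDeriv_fun_sum_apply fun i hi => (hf i hi).contDiffAt, _root_.sum_apply]

theorem fderiv_fderiv_comp_sub_apply (f : F → ℝ) (b : F) :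
    fderiv ℝ (fderiv ℝ fun x => f (x - b)) x y y = fderiv ℝ (fderiv ℝ f) (x - b) y y := by
  rw [fderiv_fderiv_apply_eq_iteratedFDeriv, fderiv_fderiv_apply_eq_iteratedFDeriv,
    iteratedFDeriv_comp_sub]

theorem ContinuousLinearMap.fderiv_fderiv_comp_apply {f : G → ℝ} (hf : ContDiff ℝ 2 f)
    (A : F →L[ℝ] G) :
    fderiv ℝ (fderiv ℝ fun x => f (A x)) x y y = fderiv ℝ (fderiv ℝ f) (A x) (A y) (A y) := by
  rw [fderiv_fderiv_apply_eq_iteratedFDeriv, fderiv_fderiv_apply_eq_iteratedFDeriv,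
    show (fun x => f (A x)) = f ∘ A from rfl, A.iteratedFDeriv_comp_right hf x le_rfl,
    ContinuousMultilinearMap.compContinuousLinearMap_apply]
  congr 1
  ext i
  fin_cases i <;> rfl

theorem fderiv_fderiv_comp_apply_of_hasDerivAt {g g' g'' : ℝ → ℝ} {q : F → ℝ}
    (hg : ∀ t, HasDerivAt g (g' t) t) (hg' : ∀ t, HasDerivAt g' (g'' t) t)
    (hq : ContDiff ℝ 2 q) :
    fderiv ℝ (fderiv ℝ fun x => g (q x)) x y y =
      g' (q x) * fderiv ℝ (fderiv ℝ q) x y y + g'' (q x) * fderiv ℝ q x y ^ 2 := by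
  have hq₁ (x : F) : HasFDerivAt q (fderiv ℝ q x) x :=
    (hq.differentiable two_ne_zero x).hasFDerivAt
  have hq₂ : HasFDerivAt (fderiv ℝ q) (fderiv ℝ (fderiv ℝ q) x) x :=
    ((hq.fderiv_right (m := 1) le_rfl).differentiable one_ne_zero x).hasFDerivAt
  have hg'q : HasFDerivAt (fun x => g' (q x)) (g'' (q x) • fderiv ℝ q x) x :=
    (hg' (q x)).comp_hasFDerivAt x (hq₁ x)
  have hD : fderiv ℝ (fun x => g (q x)) = fun x => g' (q x) • fderiv ℝ q x :=
    funext fun x => ((hg (q x)).comp_hasFDerivAt x (hq₁ x)).fderiv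
  rw [hD, (hg'q.fun_smul hq₂).fderiv]
  simp only [_root_.add_apply, FunLike.coe_smul, Pi.smul_apply,
    ContinuousLinearMap.smulRight_apply, smul_eq_mul]
  ring

end SecondDerivative

theorem hasDerivAt_one_div_one_add_sq (t : ℝ) :
    HasDerivAt (fun t : ℝ => 1 / (1 + t ^ 2)) (-(2 * t) / (1 + t ^ 2) ^ 2) t := by
  refine ((hasDerivAt_const t (1 : ℝ)).fun_div ((hasDerivAt_pow 2 t).const_add 1)
    (by positivity)).congr_deriv ?_
  push_cast
  ring

section InnerProductSpace

variable {E : Type*} [NormedAddCommGroup E] [InnerProductSpace ℝ E]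

theorem fderiv_fderiv_normSq_apply (u v : E) :
    fderiv ℝ (fderiv ℝ fun w : E => ‖w‖ ^ 2) u v v = 2 * ‖v‖ ^ 2 := by
  -- over `ℝ` the conjugate-linear `innerSL ℝ` is an `ℝ`-linear map, which `fderiv` recognises
  rw [fderiv_norm_sq, show (2 • ⇑(innerSL ℝ) : E → E →L[ℝ] ℝ) =
    ⇑((2 : ℕ) • (innerSL ℝ : E →L[ℝ] E →L[ℝ] ℝ)) from rfl, ContinuousLinearMap.fderiv,
    ← real_inner_self_eq_norm_sq]
  simp only [smul_apply, nsmul_eq_mul, Nat.cast_ofNat]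
  rfl

theorem fderiv_fderiv_normSq_sub_apply (b u v : E) :
    fderiv ℝ (fderiv ℝ fun w : E => ‖w - b‖ ^ 2) u v v = 2 * ‖v‖ ^ 2 := by
  rw [fderiv_fderiv_comp_sub_apply _ _ (fun w : E => ‖w‖ ^ 2), fderiv_fderiv_normSq_apply]

theorem fderiv_fderiv_arctan_normSq_apply (u v : E) :
    fderiv ℝ (fderiv ℝ fun w : E => arctan (‖w‖ ^ 2)) u v v =
      2 * ‖v‖ ^ 2 / (1 + (‖u‖ ^ 2) ^ 2) -
        8 * ‖u‖ ^ 2 * inner ℝ u v ^ 2 / (1 + (‖u‖ ^ 2) ^ 2) ^ 2 := by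
  rw [fderiv_fderiv_comp_apply_of_hasDerivAt _ _ hasDerivAt_arctan
    hasDerivAt_one_div_one_add_sq (contDiff_norm_sq ℝ), fderiv_fderiv_normSq_apply,
    fderiv_norm_sq_apply]
  simp only [one_div, smul_apply, coe_innerSL_apply, nsmul_eq_mul, Nat.cast_ofNat]
  ring

theorem abs_fderiv_fderiv_arctan_normSq_apply_le (u v : E) :
    |fderiv ℝ (fderiv ℝ fun w : E => arctan (‖w‖ ^ 2)) u v v| ≤ 2 * ‖v‖ ^ 2 := by
  have hcs : inner ℝ u v ^ 2 ≤ ‖u‖ ^ 2 * ‖v‖ ^ 2 := by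
    rw [← mul_pow, ← sq_abs]
    exact pow_le_pow_left₀ (abs_nonneg _) (abs_real_inner_le_norm u v) 2
  set s := ‖u‖ ^ 2
  have hs : 0 ≤ s := by positivity
  have hd : 0 < (1 + s ^ 2) ^ 2 := by positivity
  have hform : 2 * ‖v‖ ^ 2 / (1 + s ^ 2) - 8 * s * inner ℝ u v ^ 2 / (1 + s ^ 2) ^ 2 =
      (2 * ‖v‖ ^ 2 * (1 + s ^ 2) - 8 * s * inner ℝ u v ^ 2) / (1 + s ^ 2) ^ 2 := by
    field_simp
  rw [fderiv_fderiv_arctan_normSq_apply, hform, abs_le, le_div_iff₀ hd, div_le_iff₀ hd]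
  constructor
  · nlinarith [mul_le_mul_of_nonneg_left hcs hs, sq_nonneg (s ^ 2 - 1),
      mul_nonneg hs (sq_nonneg ‖v‖)]
  · nlinarith [mul_nonneg hs (sq_nonneg (inner ℝ u v)),
      mul_nonneg (sq_nonneg ‖v‖) (mul_nonneg (sq_nonneg s) (by positivity : (0 : ℝ) ≤ 1 + s ^ 2))]

variable {ι : Type*} [Fintype ι]

theorem fderiv_fderiv_normSq_apply_sub_apply (i : ι) (b : E) (x y : ι → E) :
    fderiv ℝ (fderiv ℝ fun x : ι → E => ‖x i - b‖ ^ 2) x y y = 2 * ‖y i‖ ^ 2 := by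
  have hf : ContDiff ℝ 2 fun w : E => ‖w - b‖ ^ 2 :=
    (contDiff_norm_sq ℝ).comp (contDiff_id.sub contDiff_const)
  have h := (ContinuousLinearMap.proj (R := ℝ) (φ := fun _ : ι => E) i).fderiv_fderiv_comp_apply
    x y hf
  simp only [ContinuousLinearMap.proj_apply] at h
  rw [h, fderiv_fderiv_normSq_sub_apply]

theorem fderiv_fderiv_arctan_normSq_apply_sub_apply (i j : ι) (x y : ι → E) :
    fderiv ℝ (fderiv ℝ fun x : ι → E => arctan (‖x i - x j‖ ^ 2)) x y y =
      fderiv ℝ (fderiv ℝ fun w : E => arctan (‖w‖ ^ 2)) (x i - x j) (y i - y j) (y i - y j) := by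
  have h := (ContinuousLinearMap.proj (R := ℝ) (φ := fun _ : ι => E) i - .proj j
    ).fderiv_fderiv_comp_apply x y (contDiff_norm_sq ℝ).arctan
  simpa only [_root_.sub_apply, ContinuousLinearMap.proj_apply] using h

end InnerProductSpace

theorem sum_sum_filter_lt_add_eq_sum_sum_erase {ι M : Type*} [Fintype ι] [LinearOrder ι]
    [AddCommMonoid M] (f : ι → ι → M) :
    ∑ i, ∑ j ∈ univ.filter (fun j => i < j), (f i j + f j i) =
      ∑ i, ∑ j ∈ univ.erase i, f i j := by
  have hswap : ∑ i, ∑ j ∈ univ.filter (fun j => i < j), f j i =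
      ∑ i, ∑ j ∈ univ.filter (fun j => j < i), f i j :=
    sum_comm' fun i j => by simp
  rw [sum_congr rfl fun i _ => sum_add_distrib, sum_add_distrib, hswap, ← sum_add_distrib]
  refine sum_congr rfl fun i _ => ?_
  rw [← sum_union (disjoint_filter.2 fun j _ h h' => lt_asymm h h')]
  congr 1
  ext j
  simp only [mem_union, mem_filter, mem_univ, true_and, mem_erase, and_true]
  exact ne_iff_gt_or_lt.symm

section Potential

variable {E : Type*} [NormedAddCommGroup E] [InnerProductSpace ℝ E]
  {ι : Type*} [Fintype ι] [LinearOrder ι]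

noncomputable def modifiedPotential (Q r : ι → ℝ) (c : ι → E) (x : ι → E) : ℝ :=
  ∑ i, (r i / 2 * ‖x i - c i‖ ^ 2 - Q i ^ 2 * ‖x i‖ ^ 2) -
    ∑ i, ∑ j ∈ univ.filter (fun j => i < j), Q i * Q j / 2 * arctan (‖x i - x j‖ ^ 2)

theorem fderiv_fderiv_modifiedPotential_apply (Q r : ι → ℝ) (c x y : ι → E) :
    fderiv ℝ (fderiv ℝ (modifiedPotential Q r c)) x y y =
      ∑ i, (r i - 2 * Q i ^ 2) * ‖y i‖ ^ 2 - ∑ i, ∑ j ∈ univ.filter (fun j => i < j),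
        Q i * Q j / 2 *
          fderiv ℝ (fderiv ℝ fun w : E => arctan (‖w‖ ^ 2)) (x i - x j) (y i - y j) (y i - y j) := by
  have hsq (i : ι) (b : E) : ContDiff ℝ 2 fun x : ι → E => ‖x i - b‖ ^ 2 :=
    (contDiff_norm_sq ℝ).comp (by fun_prop)
  have hsq₀ (i : ι) : ContDiff ℝ 2 fun x : ι → E => ‖x i‖ ^ 2 :=
    (contDiff_norm_sq ℝ).comp (by fun_prop)
  have harc (i j : ι) : ContDiff ℝ 2 fun x : ι → E => arctan (‖x i - x j‖ ^ 2) :=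
    ((contDiff_norm_sq ℝ).comp (by fun_prop)).arctan
  have hquad (i : ι) :
      ContDiff ℝ 2 fun x : ι → E => r i / 2 * ‖x i - c i‖ ^ 2 - Q i ^ 2 * ‖x i‖ ^ 2 :=
    (contDiff_const.mul (hsq i (c i))).sub (contDiff_const.mul (hsq₀ i))
  have hpair (i : ι) : ContDiff ℝ 2 fun x : ι → E =>
      ∑ j ∈ univ.filter (fun j => i < j), Q i * Q j / 2 * arctan (‖x i - x j‖ ^ 2) :=
    ContDiff.sum fun j _ => contDiff_const.mul (harc i j)
  unfold modifiedPotential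
  rw [fderiv_fderiv_fun_sub_apply _ _ (ContDiff.sum fun i _ => hquad i)
      (ContDiff.sum fun i _ => hpair i),
    fderiv_fderiv_fun_sum_apply _ _ fun i _ => hquad i,
    fderiv_fderiv_fun_sum_apply _ _ fun i _ => hpair i]
  congr 1
  · refine sum_congr rfl fun i _ => ?_
    have hsqD₀ := fderiv_fderiv_normSq_apply_sub_apply i 0 x y
    simp only [sub_zero] at hsqD₀
    rw [fderiv_fderiv_fun_sub_apply _ _ (contDiff_const.mul (hsq i (c i)))
        (contDiff_const.mul (hsq₀ i)),
      fderiv_fderiv_const_mul_apply _ _ _ (hsq i (c i)),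
      fderiv_fderiv_const_mul_apply _ _ _ (hsq₀ i),
      fderiv_fderiv_normSq_apply_sub_apply, hsqD₀]
    ring
  · refine sum_congr rfl fun i _ => ?_
    rw [fderiv_fderiv_fun_sum_apply _ _ fun j _ => contDiff_const.mul (harc i j)]
    refine sum_congr rfl fun j _ => ?_
    rw [fderiv_fderiv_const_mul_apply _ _ _ (harc i j),
      fderiv_fderiv_arctan_normSq_apply_sub_apply]

theorem sum_mul_norm_sq_le_fderiv_fderiv_modifiedPotential (Q r : ι → ℝ) (c x y : ι → E) :
    ∑ i, (r i - (Fintype.card ι + 1) * Q i ^ 2 - |Q i| * ∑ j ∈ univ.erase i, |Q j|) *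
        ‖y i‖ ^ 2 ≤
      fderiv ℝ (fderiv ℝ (modifiedPotential Q r c)) x y y := by
  set F : ι → ι → ℝ := fun i j => (|Q i| * |Q j| + Q i ^ 2) * ‖y i‖ ^ 2
  have hpair (i j : ι) : Q i * Q j / 2 *
      fderiv ℝ (fderiv ℝ fun w : E => arctan (‖w‖ ^ 2)) (x i - x j) (y i - y j) (y i - y j) ≤
        F i j + F j i := by
    set h := fderiv ℝ (fderiv ℝ fun w : E => arctan (‖w‖ ^ 2)) (x i - x j) (y i - y j) (y i - y j)
    have hh : |h| ≤ 2 * ‖y i - y j‖ ^ 2 := abs_fderiv_fderiv_arctan_normSq_apply_le _ _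
    have hQ : Q i * Q j / 2 * h ≤ |Q i| * |Q j| / 2 * |h| := by
      simpa only [abs_mul, abs_div, abs_two] using le_abs_self (Q i * Q j / 2 * h)
    have htri : ‖y i - y j‖ ≤ ‖y i‖ + ‖y j‖ := norm_sub_le _ _
    calc Q i * Q j / 2 * h ≤ |Q i| * |Q j| * ‖y i - y j‖ ^ 2 := by
          nlinarith [mul_nonneg (abs_nonneg (Q i)) (abs_nonneg (Q j))]
      _ ≤ |Q i| * |Q j| * (‖y i‖ + ‖y j‖) ^ 2 := by gcongr
      _ ≤ F i j + F j i := by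
          simp only [F]
          nlinarith [sq_nonneg (|Q i| * ‖y i‖ - |Q j| * ‖y j‖), sq_abs (Q i), sq_abs (Q j)]
  have hrow (i : ι) : ∑ j ∈ univ.erase i, F i j =
      (|Q i| * ∑ j ∈ univ.erase i, |Q j| + (Fintype.card ι - 1) * Q i ^ 2) * ‖y i‖ ^ 2 := by
    rw [← sum_mul, sum_add_distrib, ← mul_sum, sum_const, card_erase_of_mem (mem_univ i),
      card_univ, nsmul_eq_mul, Nat.cast_pred (Fintype.card_pos_iff.2 ⟨i⟩)]
  calc _ = ∑ i, (r i - 2 * Q i ^ 2) * ‖y i‖ ^ 2 - ∑ i, ∑ j ∈ univ.erase i, F i j := by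
        rw [← sum_sub_distrib]
        refine sum_congr rfl fun i _ => ?_
        rw [hrow]
        ring
    _ = ∑ i, (r i - 2 * Q i ^ 2) * ‖y i‖ ^ 2 -
          ∑ i, ∑ j ∈ univ.filter (fun j => i < j), (F i j + F j i) := by
        rw [sum_sum_filter_lt_add_eq_sum_sum_erase]
    _ ≤ _ := by
        rw [fderiv_fderiv_modifiedPotential_apply]
        gcongr with i _ j _
        exact hpair i j

end Potential

theorem stmt19_general (Q r : Fin 3 → ℝ)
    (c : Fin 3 → EuclideanSpace ℝ (Fin 2))
    (V : (Fin 3 → EuclideanSpace ℝ (Fin 2)) → ℝ)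
    (hV : ∀ x, V x =
      (∑ i, (r i / 2 * ‖x i - c i‖ ^ 2 - (Q i) ^ 2 * ‖x i‖ ^ 2)) -
        ∑ i, ∑ j ∈ Finset.univ.filter (fun j => i < j),
          Q i * Q j / 2 * Real.arctan (‖x i - x j‖ ^ 2))
    (lam : ℝ)
    (hlam : lam = Finset.univ.inf' Finset.univ_nonempty
      (fun i => r i - 4 * (Q i) ^ 2 - |Q i| * ∑ j ∈ Finset.univ.erase i, |Q j|)) :
    ∀ (x y : Fin 3 → EuclideanSpace ℝ (Fin 2)),
      (fderiv ℝ (fderiv ℝ V) x) y y ≥ lam * ∑ i, ‖y i‖ ^ 2 := by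
  intro x y
  have hV' : V = modifiedPotential Q r c := funext hV
  have hlam_le (i : Fin 3) : lam ≤
      r i - (Fintype.card (Fin 3) + 1) * Q i ^ 2 - |Q i| * ∑ j ∈ univ.erase i, |Q j| := by
    rw [hlam, Fintype.card_fin, show ((3 : ℕ) : ℝ) + 1 = 4 by norm_num]
    exact inf'_le _ (mem_univ i)
  rw [hV', ge_iff_le, mul_sum]
  exact (sum_le_sum fun i _ => mul_le_mul_of_nonneg_right (hlam_le i) (sq_nonneg _)).trans
    (sum_mul_norm_sq_le_fderiv_fderiv_modifiedPotential Q r c x y)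

/-- the modified potential
`Ṽ(x₁,x₂,x₃) = ∑ᵢ ((rᵢ/2)‖xᵢ - mᵢ‖² - Qᵢ²‖xᵢ‖²) - ∑_{i<j} (QᵢQⱼ/2) arctan ‖xᵢ - xⱼ‖²`
on `(ℝ²)³` is `λ`-strongly convex with
`λ = minᵢ (rᵢ - 4Qᵢ² - |Qᵢ| ∑_{j≠i} |Qⱼ|)` when this minimum is positive, i.e., its
Hessian satisfies `yᵀ ∇²Ṽ(x) y ≥ λ ‖y‖²` (with `‖y‖² = ∑ᵢ ‖yᵢ‖²`). -/
theorem stmt19 (Q r : Fin 3 → ℝ) (hr : ∀ i, 0 < r i)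
    (c : Fin 3 → EuclideanSpace ℝ (Fin 2))
    (V : (Fin 3 → EuclideanSpace ℝ (Fin 2)) → ℝ)
    (hV : ∀ x, V x =
      (∑ i, (r i / 2 * ‖x i - c i‖ ^ 2 - (Q i) ^ 2 * ‖x i‖ ^ 2)) -
        ∑ i, ∑ j ∈ Finset.univ.filter (fun j => i < j),
          Q i * Q j / 2 * Real.arctan (‖x i - x j‖ ^ 2))
    (lam : ℝ)
    (hlam : lam = Finset.univ.inf' Finset.univ_nonempty
      (fun i => r i - 4 * (Q i) ^ 2 - |Q i| * ∑ j ∈ Finset.univ.erase i, |Q j|))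
    (hpos : 0 < lam) :
    ∀ (x y : Fin 3 → EuclideanSpace ℝ (Fin 2)),
      (fderiv ℝ (fderiv ℝ V) x) y y ≥ lam * ∑ i, ‖y i‖ ^ 2 :=
  stmt19_general Q r c V hV lam hlam
end
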